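/- arXiv:1109.1902 — 7 statements merged into one kernel-verified Lean document; each statement's English description precedes it below -/
import Mathlib

section
/- Let k ≥ 2 and m ≥ 1 be integers, and let δ > 0 satisfy δ·(k + k² + Σ_{j=2}^{k} C(k,j)·δ^{j−2}·(1 + kδ)) ≤ 1/2, where C(k,j) = k!/(j!(k−j)!). If A, B ∈ M_m(ℝ) satisfy ‖A‖ < δ and ‖B‖ < δ in the operator norm, and (k⁻¹·I + A)(I + B) = (I + B)^k (k⁻¹·I + A), then B = 0. -/
/-!
Write `(1 + B)^k = 1 + k B + R` with `R = ∑_{j ≥ 2} C(k,j) B^j`. Multiplying the relation by `k`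
and cancelling turns it into `(k - 1) B = k AB - k² BA - R - k RA`. Every term on the right has
norm at most `‖B‖` times a small factor (in particular `‖R‖ ≤ ‖B‖ δ ∑ C(k,j) δ^(j-2)`), so the
hypothesis on `δ` gives `(k - 1)‖B‖ ≤ ‖B‖ / 2`, which forces `B = 0` as `k ≥ 2`.
-/

open Finset

section
variable {E : Type*}

theorem one_add_pow_eq_add_sum_Icc_two [Ring E] (b : E) (k : ℕ) :
    (1 + b) ^ k = 1 + k • b + ∑ j ∈ Icc 2 k, k.choose j • b ^ j := by
  rcases Nat.eq_zero_or_pos k with rfl | hk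
  · simp
  have hsplit : range (k + 1) = insert 0 (insert 1 (Icc 2 k)) := by
    ext j
    simp only [mem_range, mem_insert, mem_Icc]
    omega
  rw [add_comm, (Commute.one_right b).add_pow, hsplit, sum_insert (by simp),
    sum_insert (by simp)]
  simp only [one_pow, mul_one, ← nsmul_eq_mul', pow_zero, pow_one, Nat.choose_zero_right,
    Nat.choose_one_right, one_smul, add_assoc]

theorem norm_sum_Icc_two_choose_smul_pow_le [SeminormedRing E] {b : E} {δ : ℝ} (hb : ‖b‖ ≤ δ)
    (k : ℕ) :
    ‖∑ j ∈ Icc 2 k, k.choose j • b ^ j‖ ≤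
      ‖b‖ * δ * ∑ j ∈ Icc 2 k, (k.choose j : ℝ) * δ ^ (j - 2) := by
  have hδ : 0 ≤ δ := (norm_nonneg b).trans hb
  rw [mul_sum]
  refine (norm_sum_le _ _).trans (sum_le_sum fun j hj => ?_)
  obtain ⟨i, rfl⟩ : ∃ i, j = i + 2 := ⟨j - 2, by have := (mem_Icc.mp hj).1; omega⟩
  calc ‖k.choose (i + 2) • b ^ (i + 2)‖ ≤ k.choose (i + 2) * ‖b‖ ^ (i + 2) :=
        norm_nsmul_le.trans (by gcongr; exact norm_pow_le' b (by omega))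
    _ ≤ k.choose (i + 2) * (δ ^ i * δ * ‖b‖) := by rw [pow_succ, pow_succ]; gcongr
    _ = ‖b‖ * δ * (k.choose (i + 2) * δ ^ (i + 2 - 2)) := by rw [Nat.add_sub_cancel]; ring

theorem sub_one_smul_eq_of_mul_one_add_eq_pow_mul [Ring E] [Algebra ℝ E] {k : ℕ} (hk : k ≠ 0)
    {A B R : E} (hR : (1 + B) ^ k = 1 + k • B + R)
    (h : ((k : ℝ)⁻¹ • 1 + A) * (1 + B) = (1 + B) ^ k * ((k : ℝ)⁻¹ • 1 + A)) :
    ((k : ℝ) - 1) • B = (k : ℝ) • (A * B) - ((k : ℝ) ^ 2) • (B * A) - R - (k : ℝ) • (R * A) := by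
  have hk' : (k : ℝ) ≠ 0 := by exact_mod_cast hk
  rw [hR, ← Nat.cast_smul_eq_nsmul ℝ] at h
  have := congrArg ((k : ℝ) • ·) h
  simp only [add_mul, mul_add, smul_mul_assoc, mul_smul_comm, one_mul, mul_one, smul_add,
    smul_smul, mul_inv_cancel₀ hk', inv_mul_cancel₀ hk', one_smul] at this
  rw [sub_smul, one_smul, sq]
  linear_combination (norm := abel) -this

theorem sub_one_mul_norm_le_of_mul_one_add_eq_pow_mul [SeminormedRing E] [NormedAlgebra ℝ E]
    {k : ℕ} (hk : 1 ≤ k) {δ : ℝ} {A B : E} (hA : ‖A‖ ≤ δ) (hB : ‖B‖ ≤ δ)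
    (h : ((k : ℝ)⁻¹ • 1 + A) * (1 + B) = (1 + B) ^ k * ((k : ℝ)⁻¹ • 1 + A)) :
    ((k : ℝ) - 1) * ‖B‖ ≤
      ‖B‖ * (δ * (k + k ^ 2 + (∑ j ∈ Icc 2 k, (k.choose j : ℝ) * δ ^ (j - 2)) * (1 + k * δ))) := by
  set R := ∑ j ∈ Icc 2 k, k.choose j • B ^ j
  set S := ∑ j ∈ Icc 2 k, (k.choose j : ℝ) * δ ^ (j - 2)
  have hR : ‖R‖ ≤ ‖B‖ * δ * S := norm_sum_Icc_two_choose_smul_pow_le hB k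
  have hδ : 0 ≤ δ := (norm_nonneg A).trans hA
  have hS : 0 ≤ S := sum_nonneg fun j _ => by have := pow_nonneg hδ (j - 2); positivity
  have hk' : (1 : ℝ) ≤ k := by exact_mod_cast hk
  have hsmul : ∀ {c : ℝ} (X Y : E), 0 ≤ c → ‖c • (X * Y)‖ ≤ c * (‖X‖ * ‖Y‖) := fun X Y hc => by
    rw [norm_smul, Real.norm_of_nonneg hc]; gcongr; exact norm_mul_le X Y
  have key := sub_one_smul_eq_of_mul_one_add_eq_pow_mul (by omega)
    (one_add_pow_eq_add_sum_Icc_two B k) h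
  calc ((k : ℝ) - 1) * ‖B‖ = ‖((k : ℝ) - 1) • B‖ := by
        rw [norm_smul, Real.norm_of_nonneg (by linarith)]
    _ ≤ k * (‖A‖ * ‖B‖) + k ^ 2 * (‖B‖ * ‖A‖) + ‖R‖ + k * (‖R‖ * ‖A‖) := by
        rw [key]
        refine (norm_sub_le _ _).trans (add_le_add ((norm_sub_le _ _).trans (add_le_add
          ((norm_sub_le _ _).trans (add_le_add ?_ ?_)) le_rfl)) ?_) <;> apply hsmul <;> positivity
    _ ≤ k * (δ * ‖B‖) + k ^ 2 * (‖B‖ * δ) + ‖B‖ * δ * S + k * (‖B‖ * δ * S * δ) := by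
        gcongr
    _ = ‖B‖ * (δ * (k + k ^ 2 + S * (1 + k * δ))) := by ring
end

theorem stmt0_general (k m : ℕ) (hk : 2 ≤ k) (δ : ℝ)
    (hδ2 : δ * ((k : ℝ) + (k : ℝ) ^ 2 +
        ∑ j ∈ Finset.Icc 2 k, (k.choose j : ℝ) * δ ^ (j - 2) * (1 + (k : ℝ) * δ)) ≤ 1 / 2)
    (A B : EuclideanSpace ℝ (Fin m) →L[ℝ] EuclideanSpace ℝ (Fin m))
    (hA : ‖A‖ < δ) (hB : ‖B‖ < δ)
    (h : ((k : ℝ)⁻¹ • (1 : EuclideanSpace ℝ (Fin m) →L[ℝ] EuclideanSpace ℝ (Fin m)) + A)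
          * (1 + B) = (1 + B) ^ k * ((k : ℝ)⁻¹ • 1 + A)) :
    B = 0 := by
  have hest := sub_one_mul_norm_le_of_mul_one_add_eq_pow_mul (by omega) hA.le hB.le h
  rw [← sum_mul] at hδ2
  have hk' : (2 : ℝ) ≤ k := by exact_mod_cast hk
  have hB0 : ‖B‖ ≤ 0 := by nlinarith [mul_le_mul_of_nonneg_left hδ2 (norm_nonneg B), norm_nonneg B]
  exact norm_le_zero_iff.mp hB0

/-- linear-algebraic core of Lemma 2.2 of the paper.
Operators on Euclidean space `ℝ^m` (equivalently, `m × m` real matrices with the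
operator norm coming from the Euclidean norm). If `‖A‖ < δ`, `‖B‖ < δ`, where
`δ·(k + k² + Σ_{j=2}^{k} C(k,j)·δ^{j−2}·(1 + kδ)) ≤ 1/2`, and
`(k⁻¹·I + A)(I + B) = (I + B)^k (k⁻¹·I + A)`, then `B = 0`. -/
theorem stmt0 (k m : ℕ) (hk : 2 ≤ k) (hm : 1 ≤ m) (δ : ℝ) (hδ : 0 < δ)
    (hδ2 : δ * ((k : ℝ) + (k : ℝ) ^ 2 +
        ∑ j ∈ Finset.Icc 2 k, (k.choose j : ℝ) * δ ^ (j - 2) * (1 + (k : ℝ) * δ)) ≤ 1 / 2)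
    (A B : EuclideanSpace ℝ (Fin m) →L[ℝ] EuclideanSpace ℝ (Fin m))
    (hA : ‖A‖ < δ) (hB : ‖B‖ < δ)
    (h : ((k : ℝ)⁻¹ • (1 : EuclideanSpace ℝ (Fin m) →L[ℝ] EuclideanSpace ℝ (Fin m)) + A)
          * (1 + B) = (1 + B) ^ k * ((k : ℝ)⁻¹ • 1 + A)) :
    B = 0 :=
  stmt0_general k m hk δ hδ2 A B hA hB h
end

section
/- Let n ≥ 1 and k ≥ 2 be integers. Let (v_1,…,v_n) be a basis of ℝ^n and let ε > 0 be such that max_{i=1,…,n} ‖A'v_i‖ ≥ ε·‖A'‖ for every A' ∈ M_n(ℝ) (operator norm). Suppose A ∈ M_n(ℝ) and symmetric bilinear maps R_1,…,R_n : ℝ^n × ℝ^n → ℝ^n satisfy, for each i = 1,…,n and all ξ, η ∈ ℝ^n, k⁻¹·(I + A)(R_i(ξ,η)) = k·R_i(k⁻¹(I + A)ξ, k⁻¹(I + A)η), and max_{i=1,…,n} { 3‖R_i − 2Q_{v_i}‖ + ‖A‖·‖R_i‖ } < ε, where the norm of a bilinear map F is ‖F‖ = sup{‖F(ξ,η)‖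 : ‖ξ‖ ≤ 1, ‖η‖ ≤ 1}. Then A = 0. -/
open scoped RealInnerProductSpace

noncomputable section

/-- `ℝ^n` with the Euclidean inner product and norm. -/
abbrev E (n : ℕ) : Type := EuclideanSpace ℝ (Fin n)

/-- The symmetric bilinear map `Q_v(ξ,η) = ⟨ξ,η⟩·v − ⟨ξ,v⟩·η − ⟨η,v⟩·ξ`,
as a linear map in each variable. -/
def QvLin {n : ℕ} (v : E n) : E n →ₗ[ℝ] E n →ₗ[ℝ] E n :=
  LinearMap.mk₂ ℝ (fun ξ η => ⟪ξ, η⟫ • v - ⟪ξ, v⟫ • η - ⟪η, v⟫ • ξ)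
    (by
      intro ξ ξ' η
      simp only [inner_add_left, add_smul, smul_add]
      abel)
    (by
      intro r ξ η
      simp only [real_inner_smul_left]
      module)
    (by
      intro ξ η η'
      simp only [inner_add_right, inner_add_left, add_smul, smul_add]
      abel)
    (by
      intro r ξ η
      simp only [real_inner_smul_right, real_inner_smul_left]
      module)

/-- `Q_v` as a continuous bilinear map, so that its norm
`‖F‖ = sup{‖F(ξ,η)‖ : ‖ξ‖ ≤ 1, ‖η‖ ≤ 1}` is available. -/
def QvL {n : ℕ} (v : E n) : E n →L[ℝ] E n →L[ℝ] E n :=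
  LinearMap.toContinuousLinearMap
    { toFun := fun ξ => LinearMap.toContinuousLinearMap (QvLin v ξ)
      map_add' := by
        intro x y
        ext η
        simp [map_add]
      map_smul' := by
        intro r x
        ext η
        simp }

/-!
Clearing the factors `k`, the scaling relation says `(1 + A) ∘ R_i = R_i((1 + A)·, (1 + A)·)`:
`A` acts on `R_i` as a derivation up to the quadratic term `R_i(A·, A·)`. As `R_i` is close to
`2 Q_{v_i}`, `A` is then an approximate derivation of `Q_{v_i}`, with defect at most
`‖A‖ (3‖R_i - 2Q_{v_i}‖ + ‖A‖ ‖R_i‖) / 2 < ε ‖A‖ / 2`. The trace of the derivation defect of `A`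
on `Q_w` in its second slot is `n ⟪A ξ, w⟫`; taking `ξ = A† w` bounds `‖A† w‖` by the defect.
For the `v_i` that the hypothesis attaches to `A†` this gives `ε ‖A‖ ≤ ‖A† v_i‖ < ε ‖A‖ / 2`,
so `A = 0`.
-/

section NormedSpace

variable {F : Type*} [NormedAddCommGroup F] [NormedSpace ℝ F]

lemma map_bilin_eq_of_scaled {c : ℝ} (hc : c ≠ 0) {B : F →L[ℝ] F}
    {R : F →L[ℝ] F →L[ℝ] F} {ξ η : F}
    (h : c⁻¹ • B (R ξ η) = c • R (c⁻¹ • B ξ) (c⁻¹ • B η)) :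
    B (R ξ η) = R (B ξ) (B η) := by
  rw [map_smul, map_smul, smul_apply, smul_smul, smul_smul, mul_inv_cancel₀ hc, one_mul] at h
  exact smul_right_injective F (inv_ne_zero hc) h

lemma map_bilin_eq_of_one_add {A : F →L[ℝ] F} {R : F →L[ℝ] F →L[ℝ] F} {ξ η : F}
    (h : (1 + A) (R ξ η) = R ((1 + A) ξ) ((1 + A) η)) :
    A (R ξ η) = R (A ξ) η + R ξ (A η) + R (A ξ) (A η) := by
  simp only [add_apply, one_apply_eq_self, map_add] at h
  linear_combination (norm := module) h

variable {A : F →L[ℝ] F} {R Q : F →L[ℝ] F →L[ℝ] F}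

lemma two_smul_derivation_defect
    (hR : ∀ ξ η, A (R ξ η) = R (A ξ) η + R ξ (A η) + R (A ξ) (A η)) (ξ η : F) :
    (2 : ℝ) • (A (Q ξ η) - Q (A ξ) η - Q ξ (A η)) =
      R (A ξ) (A η) - A ((R - (2 : ℝ) • Q) ξ η) + (R - (2 : ℝ) • Q) (A ξ) η
        + (R - (2 : ℝ) • Q) ξ (A η) := by
  simp only [sub_apply, smul_apply, map_sub, map_smul, hR ξ η]
  module

lemma norm_derivation_defect_le
    (hR : ∀ ξ η, A (R ξ η) = R (A ξ) η + R ξ (A η) + R (A ξ) (A η)) (ξ η : F) :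
    ‖A (Q ξ η) - Q (A ξ) η - Q ξ (A η)‖
      ≤ ‖A‖ * (3 * ‖R - (2 : ℝ) • Q‖ + ‖A‖ * ‖R‖) / 2 * (‖ξ‖ * ‖η‖) := by
  set S := R - (2 : ℝ) • Q
  have hAξ := A.le_opNorm ξ
  have hAη := A.le_opNorm η
  have h2 : 2 * ‖A (Q ξ η) - Q (A ξ) η - Q ξ (A η)‖
      ≤ ‖R‖ * (‖A‖ * ‖ξ‖) * (‖A‖ * ‖η‖) + ‖A‖ * (‖S‖ * ‖ξ‖ * ‖η‖)
        + ‖S‖ * (‖A‖ * ‖ξ‖) * ‖η‖ + ‖S‖ * ‖ξ‖ * (‖A‖ * ‖η‖) :=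
    calc 2 * ‖A (Q ξ η) - Q (A ξ) η - Q ξ (A η)‖
        = ‖R (A ξ) (A η) - A (S ξ η) + S (A ξ) η + S ξ (A η)‖ := by
          rw [← two_smul_derivation_defect hR, norm_smul, Real.norm_two]
      _ ≤ ‖R (A ξ) (A η)‖ + ‖A (S ξ η)‖ + ‖S (A ξ) η‖ + ‖S ξ (A η)‖ :=
          (norm_add_le _ _).trans <| add_le_add_left
            ((norm_add_le _ _).trans <| add_le_add_left (norm_sub_le _ _) _) _
      _ ≤ _ := by
          gcongr
          · exact (R.le_opNorm₂ _ _).trans (by gcongr)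
          · exact (A.le_opNorm _).trans (by gcongr; exact S.le_opNorm₂ _ _)
          · exact (S.le_opNorm₂ _ _).trans (by gcongr)
          · exact (S.le_opNorm₂ _ _).trans (by gcongr)
  linear_combination h2 / 2

end NormedSpace

variable {n : ℕ}

lemma QvL_apply (w ξ η : E n) : QvL w ξ η = ⟪ξ, η⟫ • w - ⟪ξ, w⟫ • η - ⟪η, w⟫ • ξ := rfl

lemma sum_inner_QvL_derivation_defect {ι : Type*} [Fintype ι] (b : OrthonormalBasis ι ℝ (E n))
    (A : E n →L[ℝ] E n) (w ξ : E n) :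
    ∑ j, ⟪A (QvL w ξ (b j)) - QvL w (A ξ) (b j) - QvL w ξ (A (b j)), b j⟫
      = Fintype.card ι * ⟪A ξ, w⟫ := by
  set B := ContinuousLinearMap.adjoint A
  have hterm : ∀ j, ⟪A (QvL w ξ (b j)) - QvL w (A ξ) (b j) - QvL w ξ (A (b j)), b j⟫
      = ⟪ξ, b j⟫ * ⟪b j, A w⟫ - ⟪A ξ, b j⟫ * ⟪b j, w⟫ - ⟪B ξ, b j⟫ * ⟪b j, w⟫
        + ⟪ξ, b j⟫ * ⟪b j, B w⟫ + ⟪A ξ, w⟫ := by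
    intro j
    have hbb : ⟪b j, b j⟫ = 1 := by
      rw [real_inner_self_eq_norm_sq, b.orthonormal.1 j, one_pow]
    simp only [QvL_apply, map_sub, map_smul, inner_sub_left, real_inner_smul_left, hbb,
      ContinuousLinearMap.adjoint_inner_left, ContinuousLinearMap.adjoint_inner_right, B]
    rw [real_inner_comm (A w) (b j), real_inner_comm w (b j)]
    ring
  simp only [hterm, Finset.sum_add_distrib, Finset.sum_sub_distrib, b.sum_inner_mul_inner,
    Finset.sum_const, Finset.card_univ, nsmul_eq_mul]
  rw [ContinuousLinearMap.adjoint_inner_left, ContinuousLinearMap.adjoint_inner_right]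
  ring

lemma norm_adjoint_apply_le_of_derivation_defect {A : E n →L[ℝ] E n} {w : E n} {C : ℝ}
    (hC0 : 0 ≤ C)
    (hC : ∀ ξ η, ‖A (QvL w ξ η) - QvL w (A ξ) η - QvL w ξ (A η)‖ ≤ C * (‖ξ‖ * ‖η‖)) :
    ‖ContinuousLinearMap.adjoint A w‖ ≤ C := by
  set ξ := ContinuousLinearMap.adjoint A w
  rcases Nat.eq_zero_or_pos n with rfl | hn
  · rw [Subsingleton.elim ξ 0, norm_zero]
    exact hC0
  set b := EuclideanSpace.basisFun (Fin n) ℝ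
  have hAξ : ⟪A ξ, w⟫ = ‖ξ‖ ^ 2 := by
    rw [← ContinuousLinearMap.adjoint_inner_right, real_inner_self_eq_norm_sq]
  have hsum : (n : ℝ) * ‖ξ‖ ^ 2 ≤ n * (C * ‖ξ‖) := by
    have htrace := sum_inner_QvL_derivation_defect b A w ξ
    rw [Fintype.card_fin, hAξ] at htrace
    rw [← htrace]
    calc _ ≤ ∑ _j : Fin n, C * ‖ξ‖ := Finset.sum_le_sum fun j _ =>
          (real_inner_le_norm _ _).trans (by simpa [b.orthonormal.1 j] using hC ξ (b j))
      _ = n * (C * ‖ξ‖) := by simp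
  have hsq : ‖ξ‖ ^ 2 ≤ C * ‖ξ‖ := le_of_mul_le_mul_left hsum (by exact_mod_cast hn)
  nlinarith [norm_nonneg ξ]

theorem stmt1_general {n k : ℕ} (hk : 2 ≤ k)
    (v : Fin n → E n)
    (ε : ℝ)
    (hvε : ∀ A' : E n →L[ℝ] E n, ∃ i, ε * ‖A'‖ ≤ ‖A' (v i)‖)
    (A : E n →L[ℝ] E n)
    (R : Fin n → (E n →L[ℝ] E n →L[ℝ] E n))
    (hrel : ∀ i, ∀ ξ η : E n,
      (k : ℝ)⁻¹ • (1 + A) (R i ξ η)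
        = (k : ℝ) • R i ((k : ℝ)⁻¹ • (1 + A) ξ) ((k : ℝ)⁻¹ • (1 + A) η))
    (hnorm : ∀ i, 3 * ‖R i - (2 : ℝ) • QvL (v i)‖ + ‖A‖ * ‖R i‖ < ε) :
    A = 0 := by
  obtain ⟨i, hi⟩ := hvε (ContinuousLinearMap.adjoint A)
  rw [LinearIsometryEquiv.norm_map] at hi
  have hk0 : (k : ℝ) ≠ 0 := Nat.cast_ne_zero.mpr (by omega)
  have hderiv : ∀ ξ η, A (R i ξ η) = R i (A ξ) η + R i ξ (A η) + R i (A ξ) (A η) :=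
    fun ξ η => map_bilin_eq_of_one_add (map_bilin_eq_of_scaled hk0 (hrel i ξ η))
  have hadj := norm_adjoint_apply_le_of_derivation_defect (by positivity)
    (norm_derivation_defect_le (Q := QvL (v i)) hderiv)
  have hlt := hnorm i
  have hnonneg : 0 ≤ 3 * ‖R i - (2 : ℝ) • QvL (v i)‖ + ‖A‖ * ‖R i‖ := by positivity
  have hA : ‖A‖ ≤ 0 := by nlinarith [norm_nonneg A]
  exact norm_le_zero_iff.mp hA

/-- computational core of Lemma 2.3: let `(v_1,…,v_n)` be a basis of `ℝ^n`
and `ε > 0` with `max_i ‖A' v_i‖ ≥ ε·‖A'‖` for every matrix `A'`. If the matrix `A` and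
the symmetric bilinear maps `R_1,…,R_n` satisfy
`k⁻¹·(I + A)(R_i(ξ,η)) = k·R_i(k⁻¹(I + A)ξ, k⁻¹(I + A)η)` and
`max_i { 3‖R_i − 2Q_{v_i}‖ + ‖A‖·‖R_i‖ } < ε`, then `A = 0`. -/
theorem stmt1 {n k : ℕ} (hn : 1 ≤ n) (hk : 2 ≤ k)
    (v : Fin n → E n) (hv : LinearIndependent ℝ v)
    (ε : ℝ) (hε : 0 < ε)
    (hvε : ∀ A' : E n →L[ℝ] E n, ∃ i, ε * ‖A'‖ ≤ ‖A' (v i)‖)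
    (A : E n →L[ℝ] E n)
    (R : Fin n → (E n →L[ℝ] E n →L[ℝ] E n))
    (hRsymm : ∀ i, ∀ ξ η : E n, R i ξ η = R i η ξ)
    (hrel : ∀ i, ∀ ξ η : E n,
      (k : ℝ)⁻¹ • (1 + A) (R i ξ η)
        = (k : ℝ) • R i ((k : ℝ)⁻¹ • (1 + A) ξ) ((k : ℝ)⁻¹ • (1 + A) η))
    (hnorm : ∀ i, 3 * ‖R i - (2 : ℝ) • QvL (v i)‖ + ‖A‖ * ‖R i‖ < ε) :
    A = 0 :=
  stmt1_general hk v ε hvε A R hrel hnorm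

end
end

section
/- Let k ≥ 2 be an integer and let λ, δ > 0 satisfy λ + kδ < 1. Let V ⊆ ℝ^N be a convex open set, let F : V → ℝ^N and G : V → V be differentiable maps, and let z* ∈ V. Assume ‖DF_z‖ ≤ λ for all z ∈ V (operator norm of the Fréchet derivative), ‖D(G^m)_z − I‖ ≤ δ for all z ∈ V and all m = 1,…,k (where G^m is the m-fold iterate of G), F(z*) = z*, and F(G(z*)) = G^k(z*). Then G(z*) = z*. -/
/-!
Put `v = G z* - z*`. Since `D(G^j) - I` is `δ`-small, each step `G^j(G z*) - G^j(z*)` of the orbit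
differs from `v` by at most `δ‖v‖`, so telescoping gives `‖G^k z* - z* - k v‖ ≤ (k - 1) δ ‖v‖`.
On the other hand `G^k z* - z* = F(G z*) - F(z*)` has norm at most `λ‖v‖`. Hence
`k‖v‖ ≤ (λ + (k - 1) δ)‖v‖`, and `λ + (k - 1) δ < k` forces `v = 0`.
-/

theorem Function.norm_iterate_succ_sub_sub_nsmul_le {E : Type*} [SeminormedAddCommGroup E]
    {G : E → E} {x : E} {c : ℝ} {k : ℕ}
    (h : ∀ j, 1 ≤ j → j ≤ k → ‖G^[j] (G x) - G^[j] x - (G x - x)‖ ≤ c) :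
    ‖G^[k + 1] x - x - (k + 1) • (G x - x)‖ ≤ k * c := by
  induction k with
  | zero => simp
  | succ k ih =>
    have hsplit : G^[k + 1 + 1] x - x - (k + 1 + 1) • (G x - x) =
        (G^[k + 1] (G x) - G^[k + 1] x - (G x - x)) +
          (G^[k + 1] x - x - (k + 1) • (G x - x)) := by
      rw [Function.iterate_succ_apply, succ_nsmul]
      abel
    calc ‖G^[k + 1 + 1] x - x - (k + 1 + 1) • (G x - x)‖
        ≤ c + k * c := by
          rw [hsplit]
          exact (norm_add_le _ _).trans <| add_le_add (h (k + 1) le_add_self le_rfl)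
            (ih fun j hj1 hjk => h j hj1 (hjk.trans k.le_succ))
      _ = (k + 1 : ℕ) * c := by push_cast; ring

theorem eq_zero_of_norm_nsmul_sub_le {E : Type*} [NormedAddCommGroup E] [NormedSpace ℝ E]
    {v w : E} {n : ℕ} {a b : ℝ} (hvw : ‖n • v - w‖ ≤ a * ‖v‖) (hw : ‖w‖ ≤ b * ‖v‖)
    (hab : a + b < n) : v = 0 := by
  have hn : n * ‖v‖ ≤ (a + b) * ‖v‖ :=
    calc n * ‖v‖ = ‖n • v‖ := by rw [RCLike.norm_nsmul ℝ, nsmul_eq_mul]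
      _ ≤ ‖n • v - w‖ + ‖w‖ := norm_le_norm_sub_add _ _
      _ ≤ (a + b) * ‖v‖ := by linarith
  exact norm_le_zero_iff.mp (by nlinarith [norm_nonneg v])

theorem stmt13_general {N k : ℕ} (hk : 2 ≤ k) (lam δ : ℝ) (hδ : 0 < δ)
    (hlk : lam + (k : ℝ) * δ < 1)
    (V : Set (EuclideanSpace ℝ (Fin N))) (hVc : Convex ℝ V)
    (F G : EuclideanSpace ℝ (Fin N) → EuclideanSpace ℝ (Fin N))
    (hGV : Set.MapsTo G V V)
    (hF : ∀ z ∈ V, DifferentiableAt ℝ F z ∧ ‖fderiv ℝ F z‖ ≤ lam)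
    (hG : ∀ m : ℕ, 1 ≤ m → m ≤ k → ∀ z ∈ V, DifferentiableAt ℝ (G^[m]) z ∧
      ‖fderiv ℝ (G^[m]) z
        - ContinuousLinearMap.id ℝ (EuclideanSpace ℝ (Fin N))‖ ≤ δ)
    (zs : EuclideanSpace ℝ (Fin N)) (hzs : zs ∈ V)
    (hFz : F zs = zs) (hrel : F (G zs) = G^[k] zs) :
    G zs = zs := by
  obtain ⟨n, rfl⟩ : ∃ n, k = n + 1 := ⟨k - 1, by omega⟩
  have hGzs : G zs ∈ V := hGV hzs
  have hsteps : ∀ j, 1 ≤ j → j ≤ n →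
      ‖G^[j] (G zs) - G^[j] zs - (G zs - zs)‖ ≤ δ * ‖G zs - zs‖ := fun j hj1 hjn => by
    have := hVc.norm_image_sub_le_of_norm_fderiv_le' (fun z hz => (hG j hj1 (by omega) z hz).1)
      (fun z hz => (hG j hj1 (by omega) z hz).2) hzs hGzs
    simpa only [ContinuousLinearMap.id_apply] using this
  have hcontract : ‖G^[n + 1] zs - zs‖ ≤ lam * ‖G zs - zs‖ := by
    simpa only [hrel, hFz] using hVc.norm_image_sub_le_of_norm_fderiv_le
      (fun z hz => (hF z hz).1) (fun z hz => (hF z hz).2) hzs hGzs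
  have hlinear : ‖(n + 1 : ℕ) • (G zs - zs) - (G^[n + 1] zs - zs)‖ ≤ (n * δ) * ‖G zs - zs‖ := by
    rw [norm_sub_rev, mul_assoc]
    exact Function.norm_iterate_succ_sub_sub_nsmul_le hsteps
  refine sub_eq_zero.mp (eq_zero_of_norm_nsmul_sub_le hlinear hcontract ?_)
  push_cast at hlk ⊢
  linarith

/-- analytic core of Lemma `lemma:fixed point`: let `k ≥ 2`, `λ, δ > 0`
with `λ + kδ < 1`, let `V ⊆ ℝ^N` be a convex open set, `F : V → ℝ^N` and `G : V → V`
differentiable with `‖DF_z‖ ≤ λ` and `‖D(G^m)_z − I‖ ≤ δ` on `V` for `m = 1,…,k`.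
If `F(z*) = z*` and `F(G(z*)) = G^k(z*)` for some `z* ∈ V`, then `G(z*) = z*`. -/
theorem stmt13 {N k : ℕ} (hk : 2 ≤ k) (lam δ : ℝ) (hlam : 0 < lam) (hδ : 0 < δ)
    (hlk : lam + (k : ℝ) * δ < 1)
    (V : Set (EuclideanSpace ℝ (Fin N))) (hVo : IsOpen V) (hVc : Convex ℝ V)
    (F G : EuclideanSpace ℝ (Fin N) → EuclideanSpace ℝ (Fin N))
    (hGV : Set.MapsTo G V V)
    (hF : ∀ z ∈ V, DifferentiableAt ℝ F z ∧ ‖fderiv ℝ F z‖ ≤ lam)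
    (hG : ∀ m : ℕ, 1 ≤ m → m ≤ k → ∀ z ∈ V, DifferentiableAt ℝ (G^[m]) z ∧
      ‖fderiv ℝ (G^[m]) z
        - ContinuousLinearMap.id ℝ (EuclideanSpace ℝ (Fin N))‖ ≤ δ)
    (zs : EuclideanSpace ℝ (Fin N)) (hzs : zs ∈ V)
    (hFz : F zs = zs) (hrel : F (G zs) = G^[k] zs) :
    G zs = zs :=
  stmt13_general hk lam δ hδ hlk V hVc F G hGV hF hG zs hzs hFz hrel
end

section
/- (Weil's Implicit Function Theorem.) Let M₀, M₁, M₂ be smooth finite-dimensional manifolds and let Φ₀ : M₀ → M₁ and Φ₁ : M₁ → M₂ be smooth maps such that Φ₁ ∘ Φ₀ is a constant map with value x₂ ∈ M₂. Let x₀ ∈ M₀ and x₁ = Φ₀(x₀). If the kernel of the differential (DΦ₁)_{x₁} equals the image of the differential (DΦ₀)_{x₀}, then there exists a neighborhood U of x₁ in M₁ such that Φ₀(M₀) ∩ U = Φ₁⁻¹(x₂) ∩ U. -/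
/-!
In charts, `Φ₀` and `Φ₁` become maps `f : E₀ → E₁` and `g : E₁ → E₂` with `g ∘ f` locally
constant and `ker g' = range f'`. Choose a complement `W` of `ker g'`. The map
`(x, w) ↦ f x + w` has surjective derivative, so every point near `f a` is of the form `f x + w`
with `(x, w)` near `(a, 0)`. The map `(x, w) ↦ (x, g (f x + w))` has injective derivative,
because `g'` is injective on `W`, hence is injective near `(a, 0)`. If `g (f x + w) = g (f x)`
this forces `w = 0`, so the point lies in the image of `f`.
-/

open Set Filter Function
open scoped Manifold Topology

theorem HasStrictFDerivAt.exists_mem_nhds_injOn {𝕜 E F : Type*} [NontriviallyNormedField 𝕜]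
    [CompleteSpace 𝕜] [NormedAddCommGroup E] [NormedSpace 𝕜 E] [FiniteDimensional 𝕜 E]
    [NormedAddCommGroup F] [NormedSpace 𝕜 F] {f : E → F} {f' : E →L[𝕜] F} {a : E}
    (hf : HasStrictFDerivAt f f' a) (hf' : Injective f') : ∃ s ∈ 𝓝 a, InjOn f s := by
  obtain ⟨K, hK0, hK⟩ :=
    (f' : E →ₗ[𝕜] F).exists_antilipschitzWith (LinearMap.ker_eq_bot.2 hf')
  obtain ⟨s, hs, hfs⟩ := hf.approximates_deriv_on_nhds (c := K⁻¹ / 2) (.inr (by positivity))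
  refine ⟨s, hs, fun x hx y hy hxy => ?_⟩
  have happrox : ‖f' (x - y)‖ ≤ K⁻¹ / 2 * ‖x - y‖ := by
    simpa [hxy, map_sub, norm_sub_rev (f' y)] using hfs x hx y hy
  have hanti : ‖x - y‖ ≤ K * ‖f' (x - y)‖ := by
    simpa using ZeroHomClass.bound_of_antilipschitz (f' : E →ₗ[𝕜] F) hK (x - y)
  have hhalf : ‖f' (x - y)‖ ≤ ‖f' (x - y)‖ / 2 :=
    calc ‖f' (x - y)‖ ≤ K⁻¹ / 2 * ‖x - y‖ := happrox
      _ ≤ K⁻¹ / 2 * (K * ‖f' (x - y)‖) := by gcongr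
      _ = ‖f' (x - y)‖ / 2 := by rw [NNReal.coe_inv]; field_simp
  have hzero : f' (x - y) = 0 := norm_le_zero_iff.1 (by linarith)
  exact sub_eq_zero.1 (hf' (hzero.trans (map_zero f').symm))

theorem eventually_mem_image_of_ker_eq_range
    {𝕜 E₀ E₁ E₂ : Type*} [NontriviallyNormedField 𝕜] [CompleteSpace 𝕜]
    [NormedAddCommGroup E₀] [NormedSpace 𝕜 E₀] [FiniteDimensional 𝕜 E₀]
    [NormedAddCommGroup E₁] [NormedSpace 𝕜 E₁] [FiniteDimensional 𝕜 E₁]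
    [NormedAddCommGroup E₂] [NormedSpace 𝕜 E₂]
    {f : E₀ → E₁} {g : E₁ → E₂} {f' : E₀ →L[𝕜] E₁} {g' : E₁ →L[𝕜] E₂} {a : E₀} {c : E₂}
    (hf : HasStrictFDerivAt f f' a) (hg : HasStrictFDerivAt g g' (f a))
    (hgf : ∀ᶠ x in 𝓝 a, g (f x) = c) (hker : g'.ker = f'.range)
    {s : Set E₀} (hs : s ∈ 𝓝 a) :
    ∀ᶠ y in 𝓝 (f a), g y = c → y ∈ f '' s := by
  have := FiniteDimensional.complete 𝕜 E₁
  obtain ⟨W, hW⟩ := Submodule.exists_isCompl g'.ker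
  have := FiniteDimensional.complete 𝕜 (E₀ × W)
  set F : E₀ × W → E₁ := fun p => f p.1 + p.2
  have hF : HasStrictFDerivAt F (f'.coprod W.subtypeL) (a, 0) :=
    (hf.comp (a, 0) hasStrictFDerivAt_fst).add
      (W.subtypeL.hasStrictFDerivAt.comp (a, 0) hasStrictFDerivAt_snd)
  have hF_surj : (f'.coprod W.subtypeL).range = ⊤ := by
    rw [ContinuousLinearMap.range_coprod, Submodule.toLinearMap_subtypeL,
      Submodule.range_subtype, ← hker]
    exact hW.sup_eq_top
  have hF_nhds : map F (𝓝 (a, 0)) = 𝓝 (f a) := by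
    simpa [F] using hF.map_nhds_eq_of_surj hF_surj
  have hgF : HasStrictFDerivAt (g ∘ F) (g'.comp (f'.coprod W.subtypeL)) (a, 0) :=
    (by simpa [F] using hg : HasStrictFDerivAt g g' (F (a, 0))).comp (a, 0) hF
  have hΘ_inj : Injective
      ((ContinuousLinearMap.fst 𝕜 E₀ W).prod (g'.comp (f'.coprod W.subtypeL))) := by
    refine (injective_iff_map_eq_zero _).2 fun ⟨x, w⟩ h => ?_
    simp only [ContinuousLinearMap.prod_apply, ContinuousLinearMap.coe_fst',
      ContinuousLinearMap.coe_comp, comp_apply, ContinuousLinearMap.coprod_apply,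
      Prod.mk_eq_zero] at h
    obtain ⟨rfl, hw⟩ := h
    have : (w : E₁) ∈ g'.ker ⊓ W := ⟨by simpa using hw, w.2⟩
    simpa [hW.inf_eq_bot] using this
  obtain ⟨N, hN, hΘN⟩ := (hasStrictFDerivAt_fst.prodMk hgF).exists_mem_nhds_injOn hΘ_inj
  have hslice : Tendsto (fun p : E₀ × W => (p.1, (0 : W))) (𝓝 (a, 0)) (𝓝 (a, 0)) :=
    (continuous_fst.prodMk continuous_const).tendsto' _ _ rfl
  have hfst : Tendsto Prod.fst (𝓝 ((a, 0) : E₀ × W)) (𝓝 a) := continuous_fst.tendsto _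
  rw [← hF_nhds, eventually_map]
  filter_upwards [hN, hslice hN, hfst hs, hfst hgf] with ⟨x, w⟩ hxw hx0 hxs hgfx hgFx
  have hw : w = 0 := by
    simpa using hΘN hxw hx0 (Prod.ext rfl (by simpa [F, hgfx] using hgFx.trans hgfx.symm))
  exact ⟨x, hxs, by simp [F, hw]⟩

theorem map_extChartAt_symm_nhds_of_boundaryless {𝕜 E H M : Type*} [NontriviallyNormedField 𝕜]
    [NormedAddCommGroup E] [NormedSpace 𝕜 E] [TopologicalSpace H] [TopologicalSpace M]
    [ChartedSpace H M] (I : ModelWithCorners 𝕜 E H) [I.Boundaryless] (x : M) :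
    map (extChartAt I x).symm (𝓝 (extChartAt I x x)) = 𝓝 x := by
  simpa [I.range_eq_univ] using map_extChartAt_symm_nhdsWithin_range (I := I) x

section Manifold

variable {𝕜 : Type*} [RCLike 𝕜]
  {E₀ H₀ M₀ : Type*} [NormedAddCommGroup E₀] [NormedSpace 𝕜 E₀] [TopologicalSpace H₀]
  {I₀ : ModelWithCorners 𝕜 E₀ H₀} [TopologicalSpace M₀] [ChartedSpace H₀ M₀]
  {E₁ H₁ M₁ : Type*} [NormedAddCommGroup E₁] [NormedSpace 𝕜 E₁] [TopologicalSpace H₁]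
  {I₁ : ModelWithCorners 𝕜 E₁ H₁} [TopologicalSpace M₁] [ChartedSpace H₁ M₁]
  {E₂ H₂ M₂ : Type*} [NormedAddCommGroup E₂] [NormedSpace 𝕜 E₂] [TopologicalSpace H₂]
  {I₂ : ModelWithCorners 𝕜 E₂ H₂} [TopologicalSpace M₂] [ChartedSpace H₂ M₂]

theorem ContMDiffAt.hasStrictFDerivAt_writtenInExtChartAt [I₀.Boundaryless] {Φ : M₀ → M₁}
    {x : M₀} (hΦ : ContMDiffAt I₀ I₁ 1 Φ x) :
    HasStrictFDerivAt (writtenInExtChartAt I₀ I₁ x Φ) (mfderiv I₀ I₁ Φ x)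
      (extChartAt I₀ x x) := by
  have h := (contMDiffAt_iff.1 hΦ).2
  rw [I₀.range_eq_univ, contDiffWithinAt_univ] at h
  rw [(hΦ.mdifferentiableAt one_ne_zero).mfderiv, I₀.range_eq_univ, fderivWithin_univ]
  exact h.hasStrictFDerivAt one_ne_zero

theorem eventually_mem_image_of_ker_mfderiv_eq_range [FiniteDimensional 𝕜 E₀]
    [FiniteDimensional 𝕜 E₁] [I₀.Boundaryless] [I₁.Boundaryless]
    {Φ₀ : M₀ → M₁} {Φ₁ : M₁ → M₂} {x₀ : M₀} {x₂ : M₂}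
    (hΦ₀ : ContMDiffAt I₀ I₁ 1 Φ₀ x₀) (hΦ₁ : ContMDiffAt I₁ I₂ 1 Φ₁ (Φ₀ x₀))
    (hconst : ∀ᶠ x in 𝓝 x₀, Φ₁ (Φ₀ x) = x₂)
    (hker : (mfderiv I₁ I₂ Φ₁ (Φ₀ x₀)).ker = (mfderiv I₀ I₁ Φ₀ x₀).range)
    {s : Set M₀} (hs : s ∈ 𝓝 x₀) :
    ∀ᶠ z in 𝓝 (Φ₀ x₀), Φ₁ z = x₂ → z ∈ Φ₀ '' s := by
  set φ₀ := extChartAt I₀ x₀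
  set φ₁ := extChartAt I₁ (Φ₀ x₀)
  have hchart : ∀ᶠ u in 𝓝 (φ₀ x₀),
      φ₀.symm u ∈ s ∧ Φ₀ (φ₀.symm u) ∈ φ₁.source ∧ Φ₁ (Φ₀ (φ₀.symm u)) = x₂ :=
    Tendsto.eventually (map_extChartAt_symm_nhds_of_boundaryless I₀ x₀).le <|
      (eventually_mem_set.2 hs).and <|
        (hΦ₀.continuousAt.eventually_mem (extChartAt_source_mem_nhds _)).and hconst
  have hx₁ : writtenInExtChartAt I₀ I₁ x₀ Φ₀ (φ₀ x₀) = φ₁ (Φ₀ x₀) := by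
    simp [writtenInExtChartAt, φ₀, φ₁]
  have hgf : ∀ᶠ u in 𝓝 (φ₀ x₀), writtenInExtChartAt I₁ I₂ (Φ₀ x₀) Φ₁
      (writtenInExtChartAt I₀ I₁ x₀ Φ₀ u) = extChartAt I₂ (Φ₁ (Φ₀ x₀)) x₂ := by
    filter_upwards [hchart] with u hu
    simp only [writtenInExtChartAt, comp_apply]
    rw [φ₁.left_inv hu.2.1, hu.2.2]
  have hchart_image := eventually_mem_image_of_ker_eq_range
    hΦ₀.hasStrictFDerivAt_writtenInExtChartAt
    (hx₁ ▸ hΦ₁.hasStrictFDerivAt_writtenInExtChartAt) hgf hker hchart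
  rw [hx₁] at hchart_image
  rw [← map_extChartAt_symm_nhds_of_boundaryless I₁, eventually_map]
  filter_upwards [hchart_image] with y hy hy₂
  obtain ⟨u, ⟨hus, hu, -⟩, rfl⟩ := hy (by simp only [writtenInExtChartAt, comp_apply, hy₂])
  exact ⟨φ₀.symm u, hus, (φ₁.left_inv hu).symm⟩

end Manifold

theorem stmt14_general
    {E₀ E₁ E₂ : Type*}
    [NormedAddCommGroup E₀] [NormedSpace ℝ E₀] [FiniteDimensional ℝ E₀]
    [NormedAddCommGroup E₁] [NormedSpace ℝ E₁] [FiniteDimensional ℝ E₁]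
    [NormedAddCommGroup E₂] [NormedSpace ℝ E₂]
    {M₀ M₁ M₂ : Type*}
    [TopologicalSpace M₀] [ChartedSpace E₀ M₀]
    [TopologicalSpace M₁] [ChartedSpace E₁ M₁]
    [TopologicalSpace M₂] [ChartedSpace E₂ M₂]
    (Φ₀ : M₀ → M₁) (Φ₁ : M₁ → M₂)
    (hΦ₀ : ContMDiff 𝓘(ℝ, E₀) 𝓘(ℝ, E₁) (⊤ : ℕ∞) Φ₀)
    (hΦ₁ : ContMDiff 𝓘(ℝ, E₁) 𝓘(ℝ, E₂) (⊤ : ℕ∞) Φ₁)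
    (x₂ : M₂) (hconst : ∀ y, Φ₁ (Φ₀ y) = x₂)
    (x₀ : M₀)
    (hker : LinearMap.ker (mfderiv 𝓘(ℝ, E₁) 𝓘(ℝ, E₂) Φ₁ (Φ₀ x₀)).toLinearMap
      = LinearMap.range (mfderiv 𝓘(ℝ, E₀) 𝓘(ℝ, E₁) Φ₀ x₀).toLinearMap) :
    ∃ U ∈ nhds (Φ₀ x₀), Set.range Φ₀ ∩ U = Φ₁ ⁻¹' {x₂} ∩ U := by
  have h1 : (1 : WithTop ℕ∞) ≤ (⊤ : ℕ∞) := by exact_mod_cast le_top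
  have hU := eventually_mem_image_of_ker_mfderiv_eq_range (hΦ₀.contMDiffAt.of_le h1)
    (hΦ₁.contMDiffAt.of_le h1) (.of_forall hconst) hker univ_mem
  rw [image_univ] at hU
  refine ⟨{z | Φ₁ z = x₂ → z ∈ range Φ₀}, hU, ?_⟩
  ext z
  constructor
  · rintro ⟨⟨y, rfl⟩, hy⟩
    exact ⟨hconst y, hy⟩
  · rintro ⟨hz, hzU⟩
    exact ⟨hzU hz, hzU⟩

/-- Weil's Implicit Function Theorem, Theorem `thm:Weil`: let
`Φ₀ : M₀ → M₁` and `Φ₁ : M₁ → M₂` be smooth maps between smooth finite-dimensional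
manifolds such that `Φ₁ ∘ Φ₀` is constant with value `x₂`. If the kernel of the
differential of `Φ₁` at `x₁ = Φ₀(x₀)` equals the image of the differential of `Φ₀`
at `x₀`, then there is a neighborhood `U` of `x₁` with
`Φ₀(M₀) ∩ U = Φ₁⁻¹(x₂) ∩ U`. -/
theorem stmt14
    {E₀ E₁ E₂ : Type*}
    [NormedAddCommGroup E₀] [NormedSpace ℝ E₀] [FiniteDimensional ℝ E₀]
    [NormedAddCommGroup E₁] [NormedSpace ℝ E₁] [FiniteDimensional ℝ E₁]
    [NormedAddCommGroup E₂] [NormedSpace ℝ E₂] [FiniteDimensional ℝ E₂]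
    {M₀ M₁ M₂ : Type*}
    [TopologicalSpace M₀] [ChartedSpace E₀ M₀] [IsManifold 𝓘(ℝ, E₀) ((⊤ : ℕ∞) : WithTop ℕ∞) M₀]
    [TopologicalSpace M₁] [ChartedSpace E₁ M₁] [IsManifold 𝓘(ℝ, E₁) ((⊤ : ℕ∞) : WithTop ℕ∞) M₁]
    [TopologicalSpace M₂] [ChartedSpace E₂ M₂] [IsManifold 𝓘(ℝ, E₂) ((⊤ : ℕ∞) : WithTop ℕ∞) M₂]
    (Φ₀ : M₀ → M₁) (Φ₁ : M₁ → M₂)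
    (hΦ₀ : ContMDiff 𝓘(ℝ, E₀) 𝓘(ℝ, E₁) (⊤ : ℕ∞) Φ₀)
    (hΦ₁ : ContMDiff 𝓘(ℝ, E₁) 𝓘(ℝ, E₂) (⊤ : ℕ∞) Φ₁)
    (x₂ : M₂) (hconst : ∀ y, Φ₁ (Φ₀ y) = x₂)
    (x₀ : M₀)
    (hker : LinearMap.ker (mfderiv 𝓘(ℝ, E₁) 𝓘(ℝ, E₂) Φ₁ (Φ₀ x₀)).toLinearMap
      = LinearMap.range (mfderiv 𝓘(ℝ, E₀) 𝓘(ℝ, E₁) Φ₀ x₀).toLinearMap) :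
    ∃ U ∈ nhds (Φ₀ x₀), Set.range Φ₀ ∩ U = Φ₁ ⁻¹' {x₂} ∩ U :=
  stmt14_general Φ₀ Φ₁ hΦ₀ hΦ₁ x₂ hconst x₀ hker
end

section
/- Let n ≥ 1 and k ≥ 2 be integers and write F̄(x) = k⁻¹x. Let U be a neighborhood of 0 in ℝ^n and let G₁, G₂ : U → ℝ^n be C^∞ maps with G_i(0) = 0, the first derivative D⁽¹⁾₀G_i = I at 0, and equal second derivatives at 0: D⁽²⁾₀G₁ = D⁽²⁾₀G₂. Assume there is an r > 0 such that for each i = 1,2 and every x with ‖x‖ ≤ r, all the partial iterates G_i^m(k⁻¹x) for m = 1,…,k are defined (remain in U), and k⁻¹·G_i(x) = G_i^k(k⁻¹x) (that is, F̄ ∘ G_i = G_i^k ∘ F̄ near 0). Then G₁ = G₂ on a neighborhood of 0. -/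
noncomputable section

/-!
Let `f = G₁ - G₂`. Equal 2-jets make `f = O(‖x‖³)` at `0`, and for every `L > 1` both `Gᵢ` are
`L`-Lipschitz near `0`. The relation gives `f x = k • (G₁^[k] y - G₂^[k] y)` with `y = k⁻¹ • x`;
telescoping along the `G₂`-orbit of `y`, which stays within `L ^ k * ‖x‖ / k`, turns a bound
`‖f x‖ ≤ c * ‖x‖ ^ 3` into `‖f x‖ ≤ c * (L ^ (4 * k) / k) * ‖x‖ ^ 3` on the same ball. Choosing
`L ^ (4 * k) < k` and iterating forces `f = 0` near `0`.
-/

open Filter Metric Asymptotics Set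
open scoped NNReal Topology

section Iterates

variable {α : Type*} [PseudoMetricSpace α] {G H : α → α} {L : ℝ≥0}

theorem dist_iterate_le_pow_mul_dist (hL : 1 ≤ L) {x₀ : α} {ρ : ℝ}
    (hG : LipschitzOnWith L G (closedBall x₀ ρ)) (hx₀ : G x₀ = x₀) {y : α} {j : ℕ}
    (hy : (L : ℝ) ^ j * dist y x₀ ≤ ρ) : dist (G^[j] y) x₀ ≤ L ^ j * dist y x₀ := by
  induction j with
  | zero => simp
  | succ j ih =>
    have hLj : (L : ℝ) ^ j * dist y x₀ ≤ L ^ (j + 1) * dist y x₀ := by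
      gcongr
      omega
    have hρ : 0 ≤ ρ := (by positivity : (0 : ℝ) ≤ L ^ (j + 1) * dist y x₀).trans hy
    have ih := ih (hLj.trans hy)
    calc dist (G^[j + 1] y) x₀ = dist (G (G^[j] y)) (G x₀) := by
          rw [Function.iterate_succ_apply', hx₀]
      _ ≤ L * dist (G^[j] y) x₀ :=
          hG.dist_le_mul _ (ih.trans (hLj.trans hy)) _ (mem_closedBall_self hρ)
      _ ≤ L * (L ^ j * dist y x₀) := by gcongr
      _ = L ^ (j + 1) * dist y x₀ := by ring

theorem dist_iterate_iterate_le (hL : 1 ≤ L) {s : Set α} (hG : LipschitzOnWith L G s)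
    {y : α} {D : ℝ} {j : ℕ} (hGs : ∀ i < j, G^[i] y ∈ s) (hHs : ∀ i < j, H^[i] y ∈ s)
    (hD : ∀ i < j, dist (G (H^[i] y)) (H (H^[i] y)) ≤ D) :
    dist (G^[j] y) (H^[j] y) ≤ j * L ^ j * D := by
  induction j with
  | zero => simp
  | succ j ih =>
    have ih := ih (fun i hi => hGs i (by omega)) (fun i hi => hHs i (by omega))
      (fun i hi => hD i (by omega))
    have hDj := hD j j.lt_succ_self
    have hD0 : 0 ≤ D := dist_nonneg.trans hDj
    have hLj : (1 : ℝ) ≤ L ^ (j + 1) := one_le_pow₀ (by exact_mod_cast hL)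
    calc dist (G^[j + 1] y) (H^[j + 1] y)
        ≤ dist (G (G^[j] y)) (G (H^[j] y)) + dist (G (H^[j] y)) (H (H^[j] y)) := by
          rw [Function.iterate_succ_apply', Function.iterate_succ_apply']
          exact dist_triangle _ _ _
      _ ≤ L * (j * L ^ j * D) + L ^ (j + 1) * D := by
          gcongr
          · exact hG.dist_le_mul _ (hGs j j.lt_succ_self) _ (hHs j j.lt_succ_self) |>.trans
              (by gcongr)
          · exact hDj.trans (le_mul_of_one_le_left hD0 hLj)
      _ = (j + 1 : ℕ) * L ^ (j + 1) * D := by push_cast; ring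

end Iterates

section Jets

-- One universe for `V` and `W`, so that the induction can pass from `f` to `fderiv ℝ f`.
universe u

variable {V W : Type u} [NormedAddCommGroup V] [NormedSpace ℝ V]
  [NormedAddCommGroup W] [NormedSpace ℝ W]

theorem isBigO_norm_pow_succ_of_fderiv {f : V → W} {p : ℕ}
    (hf : ∀ᶠ x in 𝓝 0, DifferentiableAt ℝ f x) (hf0 : f 0 = 0)
    (hf' : fderiv ℝ f =O[𝓝 0] fun x => ‖x‖ ^ p) : f =O[𝓝 0] fun x => ‖x‖ ^ (p + 1) := by
  obtain ⟨C, hC, hbound⟩ := hf'.exists_nonneg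
  obtain ⟨ρ, hρ, hball⟩ := nhds_basis_closedBall.mem_iff.1 (hf.and hbound.bound)
  refine IsBigO.of_bound C (eventually_of_mem (closedBall_mem_nhds 0 hρ) fun x hx => ?_)
  have hsub : closedBall (0 : V) ‖x‖ ⊆ closedBall 0 ρ :=
    closedBall_subset_closedBall (mem_closedBall_zero_iff.1 hx)
  have hderiv : ∀ z ∈ closedBall (0 : V) ‖x‖, ‖fderiv ℝ f z‖ ≤ C * ‖x‖ ^ p := fun z hz => by
    refine (hball (hsub hz)).2.trans ?_
    rw [norm_pow, norm_norm]
    gcongr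
    exact mem_closedBall_zero_iff.1 hz
  have := (convex_closedBall (0 : V) ‖x‖).norm_image_sub_le_of_norm_fderiv_le
    (fun z hz => (hball (hsub hz)).1) hderiv (mem_closedBall_self (norm_nonneg x))
    (mem_closedBall_zero_iff.2 le_rfl)
  rw [hf0, sub_zero, sub_zero] at this
  rw [norm_pow, norm_norm, pow_succ, ← mul_assoc]
  exact this

theorem isBigO_norm_pow_of_iteratedFDeriv_eq_zero {n : ℕ} {f : V → W} (hf : ContDiffAt ℝ n f 0)
    (h : ∀ i < n, iteratedFDeriv ℝ i f 0 = 0) : f =O[𝓝 0] fun x => ‖x‖ ^ n := by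
  induction n generalizing W with
  | zero => simpa using hf.continuousAt.isBigO_one ℝ
  | succ n ih =>
    refine isBigO_norm_pow_succ_of_fderiv ?_ ?_ (ih (hf.fderiv_right le_rfl) fun i hi => ?_)
    · exact (hf.eventually (by simp)).mono fun x hx => hx.differentiableAt (by simp)
    · rw [← norm_eq_zero, ← norm_iteratedFDeriv_zero (𝕜 := ℝ), h 0 n.succ_pos, norm_zero]
    · rw [← norm_eq_zero, norm_iteratedFDeriv_fderiv, h (i + 1) (by omega), norm_zero]

end Jets

theorem NNReal.exists_one_lt_pow_lt {a : ℝ≥0} (ha : 1 < a) (N : ℕ) :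
    ∃ L : ℝ≥0, 1 < L ∧ L ^ N < a := by
  have hpow : ∀ᶠ L in 𝓝 (1 : ℝ≥0), L ^ N < a :=
    (continuous_pow N).continuousAt.eventually_lt continuousAt_const (by simpa using ha)
  obtain ⟨L, hLa, hL⟩ := ((hpow.filter_mono nhdsWithin_le_nhds).and self_mem_nhdsWithin).exists
    (f := 𝓝[>] (1 : ℝ≥0))
  exact ⟨L, hL, hLa⟩

section Renormalization

variable {V : Type*} [NormedAddCommGroup V] [NormedSpace ℝ V] {G₁ G₂ : V → V} {k : ℕ}
  {L : ℝ≥0} {ρ c : ℝ}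

theorem norm_sub_le_of_smul_inv_comp_eq_iterate_comp (hL : 1 ≤ L) (hLk : (L : ℝ) ^ k ≤ k)
    (hc : 0 ≤ c) (hG₁ : LipschitzOnWith L G₁ (closedBall 0 ρ))
    (hG₂ : LipschitzOnWith L G₂ (closedBall 0 ρ)) (h0₁ : G₁ 0 = 0) (h0₂ : G₂ 0 = 0)
    (hrel₁ : ∀ x ∈ closedBall (0 : V) ρ, (k : ℝ)⁻¹ • G₁ x = G₁^[k] ((k : ℝ)⁻¹ • x))
    (hrel₂ : ∀ x ∈ closedBall (0 : V) ρ, (k : ℝ)⁻¹ • G₂ x = G₂^[k] ((k : ℝ)⁻¹ • x))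
    (hbound : ∀ x ∈ closedBall (0 : V) ρ, ‖G₁ x - G₂ x‖ ≤ c * ‖x‖ ^ 3)
    {x : V} (hx : x ∈ closedBall (0 : V) ρ) :
    ‖G₁ x - G₂ x‖ ≤ c * (L ^ (4 * k) / k) * ‖x‖ ^ 3 := by
  have hL0 : (0 : ℝ) < L := zero_lt_one.trans_le (by exact_mod_cast hL)
  have hk : (0 : ℝ) < k := (pow_pos hL0 k).trans_le hLk
  set y := (k : ℝ)⁻¹ • x
  set R := (L : ℝ) ^ k * ‖y‖ with hR
  have hy : ‖y‖ = ‖x‖ / k := by simp [y, norm_smul, div_eq_inv_mul]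
  have hRρ : R ≤ ρ := by
    refine le_trans ?_ (mem_closedBall_zero_iff.1 hx)
    rw [hR, hy, mul_div_assoc', div_le_iff₀ hk, mul_comm ‖x‖]
    gcongr
  have horbit : ∀ {G : V → V}, LipschitzOnWith L G (closedBall 0 ρ) → G 0 = 0 →
      ∀ i ≤ k, ‖G^[i] y‖ ≤ R := by
    intro G hG h0 i hi
    have hLi : (L : ℝ) ^ i * ‖y‖ ≤ R := by rw [hR]; gcongr
    simpa using (dist_iterate_le_pow_mul_dist hL hG h0 (by simpa using hLi.trans hRρ)).trans
      (by simpa using hLi)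
  have hmem : ∀ {G : V → V}, LipschitzOnWith L G (closedBall 0 ρ) → G 0 = 0 →
      ∀ i < k, G^[i] y ∈ closedBall 0 ρ := fun hG h0 i hi =>
    mem_closedBall_zero_iff.2 ((horbit hG h0 i hi.le).trans hRρ)
  have hdefect : ∀ i < k, dist (G₁ (G₂^[i] y)) (G₂ (G₂^[i] y)) ≤ c * R ^ 3 := fun i hi => by
    rw [dist_eq_norm]
    refine (hbound _ (hmem hG₂ h0₂ i hi)).trans ?_
    gcongr
    exact horbit hG₂ h0₂ i hi.le
  have hx_eq : G₁ x - G₂ x = (k : ℝ) • (G₁^[k] y - G₂^[k] y) := by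
    rw [smul_sub, ← hrel₁ x hx, ← hrel₂ x hx, smul_inv_smul₀ hk.ne', smul_inv_smul₀ hk.ne']
  calc ‖G₁ x - G₂ x‖ = k * dist (G₁^[k] y) (G₂^[k] y) := by
        rw [hx_eq, norm_smul, dist_eq_norm, Real.norm_natCast]
    _ ≤ k * (k * L ^ k * (c * R ^ 3)) := by
        gcongr
        exact dist_iterate_iterate_le hL hG₁ (hmem hG₁ h0₁) (hmem hG₂ h0₂) hdefect
    _ = c * (L ^ (4 * k) / k) * ‖x‖ ^ 3 := by
        rw [hR, hy]
        field_simp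
        ring

theorem eqOn_closedBall_of_smul_inv_comp_eq_iterate_comp (hL : 1 ≤ L)
    (hLk : (L : ℝ) ^ (4 * k) < k) (hc : 0 ≤ c) (hG₁ : LipschitzOnWith L G₁ (closedBall 0 ρ))
    (hG₂ : LipschitzOnWith L G₂ (closedBall 0 ρ)) (h0₁ : G₁ 0 = 0) (h0₂ : G₂ 0 = 0)
    (hrel₁ : ∀ x ∈ closedBall (0 : V) ρ, (k : ℝ)⁻¹ • G₁ x = G₁^[k] ((k : ℝ)⁻¹ • x))
    (hrel₂ : ∀ x ∈ closedBall (0 : V) ρ, (k : ℝ)⁻¹ • G₂ x = G₂^[k] ((k : ℝ)⁻¹ • x))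
    (hbound : ∀ x ∈ closedBall (0 : V) ρ, ‖G₁ x - G₂ x‖ ≤ c * ‖x‖ ^ 3) :
    EqOn G₁ G₂ (closedBall 0 ρ) := by
  set θ := (L : ℝ) ^ (4 * k) / k
  have hk : (0 : ℝ) < k := (by positivity : (0 : ℝ) ≤ L ^ (4 * k)).trans_lt hLk
  have hθ : θ < 1 := (div_lt_one hk).2 hLk
  have hLk' : (L : ℝ) ^ k ≤ k :=
    (pow_le_pow_right₀ (by exact_mod_cast hL) (by omega)).trans hLk.le
  have hgeom : ∀ m : ℕ, ∀ x ∈ closedBall (0 : V) ρ, ‖G₁ x - G₂ x‖ ≤ c * θ ^ m * ‖x‖ ^ 3 := by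
    intro m
    induction m with
    | zero => simpa using hbound
    | succ m ih =>
      intro x hx
      rw [pow_succ, ← mul_assoc]
      exact norm_sub_le_of_smul_inv_comp_eq_iterate_comp hL hLk' (by positivity) hG₁ hG₂ h0₁ h0₂
        hrel₁ hrel₂ ih hx
  intro x hx
  have hlim : Tendsto (fun m : ℕ => c * θ ^ m * ‖x‖ ^ 3) atTop (𝓝 0) := by
    simpa using ((tendsto_pow_atTop_nhds_zero_of_lt_one (by positivity) hθ).const_mul c).mul_const
      (‖x‖ ^ 3)
  exact sub_eq_zero.1 (norm_le_zero_iff.1 (ge_of_tendsto' hlim fun m => hgeom m x hx))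

end Renormalization

theorem eventuallyEq_of_smul_inv_comp_eq_iterate_comp {V : Type*} [NormedAddCommGroup V]
    [NormedSpace ℝ V] {G₁ G₂ : V → V} {k : ℕ} (hk : 2 ≤ k)
    (hG₁ : ContDiffAt ℝ 3 G₁ 0) (hG₂ : ContDiffAt ℝ 3 G₂ 0) (h0₁ : G₁ 0 = 0) (h0₂ : G₂ 0 = 0)
    (hD₁ : fderiv ℝ G₁ 0 = ContinuousLinearMap.id ℝ V)
    (hD₂ : fderiv ℝ G₂ 0 = ContinuousLinearMap.id ℝ V)
    (hD2 : iteratedFDeriv ℝ 2 G₁ 0 = iteratedFDeriv ℝ 2 G₂ 0)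
    (hrel₁ : ∀ᶠ x in 𝓝 0, (k : ℝ)⁻¹ • G₁ x = G₁^[k] ((k : ℝ)⁻¹ • x))
    (hrel₂ : ∀ᶠ x in 𝓝 0, (k : ℝ)⁻¹ • G₂ x = G₂^[k] ((k : ℝ)⁻¹ • x)) :
    G₁ =ᶠ[𝓝 0] G₂ := by
  have hjet : ∀ i < 3, iteratedFDeriv ℝ i (G₁ - G₂) 0 = 0 := by
    intro i hi
    rw [iteratedFDeriv_sub_apply (hG₁.of_le (by exact_mod_cast hi.le))
      (hG₂.of_le (by exact_mod_cast hi.le)), sub_eq_zero]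
    interval_cases i
    · ext; simp [h0₁, h0₂]
    · ext; simp [hD₁, hD₂]
    · exact hD2
  obtain ⟨c, hc, hcubic⟩ :=
    (isBigO_norm_pow_of_iteratedFDeriv_eq_zero (hG₁.sub hG₂) hjet).exists_nonneg
  obtain ⟨L, hL, hLk⟩ := NNReal.exists_one_lt_pow_lt (a := k) (by exact_mod_cast hk) (4 * k)
  have hid : ‖ContinuousLinearMap.id ℝ V‖₊ < L := by
    refine lt_of_le_of_lt ?_ hL
    exact_mod_cast ContinuousLinearMap.norm_id_le
  obtain ⟨t₁, ht₁, hLip₁⟩ :=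
    (hG₁.of_le (by norm_num)).exists_lipschitzOnWith_of_nnnorm_lt L (hD₁ ▸ hid)
  obtain ⟨t₂, ht₂, hLip₂⟩ :=
    (hG₂.of_le (by norm_num)).exists_lipschitzOnWith_of_nnnorm_lt L (hD₂ ▸ hid)
  obtain ⟨ρ, hρ, hball⟩ := nhds_basis_closedBall.mem_iff.1
    (inter_mem (inter_mem ht₁ ht₂) (hcubic.bound.and (hrel₁.and hrel₂)))
  refine eventually_of_mem (closedBall_mem_nhds 0 hρ)
    (eqOn_closedBall_of_smul_inv_comp_eq_iterate_comp hL.le (by exact_mod_cast hLk) hc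
      (hLip₁.mono fun x hx => (hball hx).1.1) (hLip₂.mono fun x hx => (hball hx).1.2) h0₁ h0₂
      (fun x hx => (hball hx).2.2.1) (fun x hx => (hball hx).2.2.2) fun x hx => ?_)
  simpa using (hball hx).2.1

theorem stmt15_general {n k : ℕ} (hk : 2 ≤ k)
    (U : Set (E n)) (hU : U ∈ nhds (0 : E n))
    (G₁ G₂ : E n → E n)
    (hsm₁ : ContDiffOn ℝ (⊤ : ℕ∞) G₁ U) (hsm₂ : ContDiffOn ℝ (⊤ : ℕ∞) G₂ U)
    (h0₁ : G₁ 0 = 0) (h0₂ : G₂ 0 = 0)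
    (hD₁ : fderiv ℝ G₁ 0 = ContinuousLinearMap.id ℝ (E n))
    (hD₂ : fderiv ℝ G₂ 0 = ContinuousLinearMap.id ℝ (E n))
    (hD2 : iteratedFDeriv ℝ 2 G₁ 0 = iteratedFDeriv ℝ 2 G₂ 0)
    (r : ℝ) (hr : 0 < r)
    (hrel₁ : ∀ x : E n, ‖x‖ ≤ r → (k : ℝ)⁻¹ • G₁ x = G₁^[k] ((k : ℝ)⁻¹ • x))
    (hrel₂ : ∀ x : E n, ‖x‖ ≤ r → (k : ℝ)⁻¹ • G₂ x = G₂^[k] ((k : ℝ)⁻¹ • x)) :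
    ∃ V ∈ nhds (0 : E n), Set.EqOn G₁ G₂ V := by
  have hsmooth : ∀ {G : E n → E n}, ContDiffOn ℝ (⊤ : ℕ∞) G U → ContDiffAt ℝ 3 G 0 :=
    fun hG => (hG.contDiffAt hU).of_le (WithTop.coe_le_coe.2 le_top)
  have hnear : ∀ {P : E n → Prop}, (∀ x : E n, ‖x‖ ≤ r → P x) → ∀ᶠ x in 𝓝 0, P x :=
    fun hP => eventually_of_mem (closedBall_mem_nhds 0 hr) fun x hx =>
      hP x (mem_closedBall_zero_iff.1 hx)
  exact ⟨_, eventuallyEq_of_smul_inv_comp_eq_iterate_comp hk (hsmooth hsm₁) (hsmooth hsm₂)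
    h0₁ h0₂ hD₁ hD₂ hD2 (hnear hrel₁) (hnear hrel₂), fun _ hx => hx⟩

/-- injectivity part of Lemma `lemma:Theta`: if two `C^∞` germs `G₁, G₂`
at `0 ∈ ℝ^n` fix `0`, have identity first derivative and equal second derivatives at `0`,
and both satisfy the relation `F̄ ∘ G_i = G_i^k ∘ F̄` (with `F̄(x) = k⁻¹x`) near `0`
(with all partial iterates defined), then `G₁ = G₂` on a neighborhood of `0`. -/
theorem stmt15 {n k : ℕ} (hn : 1 ≤ n) (hk : 2 ≤ k)
    (U : Set (E n)) (hU : U ∈ nhds (0 : E n))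
    (G₁ G₂ : E n → E n)
    (hsm₁ : ContDiffOn ℝ (⊤ : ℕ∞) G₁ U) (hsm₂ : ContDiffOn ℝ (⊤ : ℕ∞) G₂ U)
    (h0₁ : G₁ 0 = 0) (h0₂ : G₂ 0 = 0)
    (hD₁ : fderiv ℝ G₁ 0 = ContinuousLinearMap.id ℝ (E n))
    (hD₂ : fderiv ℝ G₂ 0 = ContinuousLinearMap.id ℝ (E n))
    (hD2 : iteratedFDeriv ℝ 2 G₁ 0 = iteratedFDeriv ℝ 2 G₂ 0)
    (r : ℝ) (hr : 0 < r) (hrU : Metric.closedBall (0 : E n) r ⊆ U)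
    (hiter : ∀ x : E n, ‖x‖ ≤ r → ∀ m ≤ k,
      G₁^[m] ((k : ℝ)⁻¹ • x) ∈ U ∧ G₂^[m] ((k : ℝ)⁻¹ • x) ∈ U)
    (hrel₁ : ∀ x : E n, ‖x‖ ≤ r → (k : ℝ)⁻¹ • G₁ x = G₁^[k] ((k : ℝ)⁻¹ • x))
    (hrel₂ : ∀ x : E n, ‖x‖ ≤ r → (k : ℝ)⁻¹ • G₂ x = G₂^[k] ((k : ℝ)⁻¹ • x)) :
    ∃ V ∈ nhds (0 : E n), Set.EqOn G₁ G₂ V :=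
  stmt15_general hk U hU G₁ G₂ hsm₁ hsm₂ h0₁ h0₂ hD₁ hD₂ hD2 r hr hrel₁ hrel₂
end
end

section
/- Let Q : ℝ^n × ℝ^n → ℝ^n be a symmetric bilinear map, let U be a neighborhood of 0 in ℝ^n, let ε > 0, and let γ : (−ε,ε) × U → ℝ^n be a C^∞ map satisfying γ(0,x) = x for all x ∈ U and ∂γ/∂t(t,x) = Q(γ(t,x), γ(t,x)) for all (t,x) ∈ (−ε,ε) × U (i.e., γ is a local flow of the quadratic vector field X_Q(x) = Q(x,x)). Then for every t ∈ (−ε,ε): γ(t,0) = 0, the first derivative in x of γ(t,·) at 0 is the identity, and the second derivative in x of γ(t,·) at 0 equals 2t·Q. -/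
open scoped RealInnerProductSpace

noncomputable section

/-- A map `ℝ^n × ℝ^n → ℝ^n` is a symmetric bilinear map. -/
def IsSymmBilin {n : ℕ} (q : E n → E n → E n) : Prop :=
  (∀ ξ η, q ξ η = q η ξ) ∧ ∀ ξ, IsLinearMap ℝ (q ξ)

/-!
Since `Q(0,0) = 0`, uniqueness of solutions of the flow equation gives `γ(t,0) = 0`.
Differentiating the flow equation in `x` and exchanging `∂ₜ` with `Dₓ` (Schwarz),
`∂ₜ Dₓγ(t,0) = 2Q(γ(t,0), Dₓγ(t,0)·) = 0` and
`∂ₜ Dₓ²γ(t,0)[ξ,η] = Q(Dₓγ ξ, Dₓγ η) + Q(Dₓγ η, Dₓγ ξ) = 2Q(ξ,η)`.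
Integrating from `Dₓγ(0,0) = I` and `Dₓ²γ(0,0) = 0` gives the claim.
-/

open Set Filter Topology Function

section Calculus

variable {V W X : Type*} [NormedAddCommGroup V] [NormedSpace ℝ V]
  [NormedAddCommGroup W] [NormedSpace ℝ W] [NormedAddCommGroup X] [NormedSpace ℝ X]

theorem eq_add_sub_smul_of_hasDerivAt {f : ℝ → W} {f' : W} {a b s t : ℝ}
    (hf : ∀ r ∈ Ioo a b, HasDerivAt f f' r) (hs : s ∈ Ioo a b) (ht : t ∈ Ioo a b) :
    f t = f s + (t - s) • f' := by
  have hline : ∀ r, HasDerivAt (fun r => f s + (r - s) • f') f' r := fun r => by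
    simpa using ((hasDerivAt_id r).sub_const s).smul_const f' |>.const_add (f s)
  refine isOpen_Ioo.eqOn_of_deriv_eq isPreconnected_Ioo
    (fun r hr => (hf r hr).differentiableAt.differentiableWithinAt)
    (fun r _ => (hline r).differentiableAt.differentiableWithinAt)
    (fun r hr => ?_) hs (by simp) ht
  rw [(hf r hr).deriv, (hline r).deriv]

theorem ODE_solution_unique_of_mem_Ioo_of_locallyLipschitz {v : V → V} (hv : LocallyLipschitz v)
    {f g : ℝ → V} {a b t₀ : ℝ} (ht₀ : t₀ ∈ Ioo a b)
    (hf : ∀ t ∈ Ioo a b, HasDerivAt f (v (f t)) t)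
    (hg : ∀ t ∈ Ioo a b, HasDerivAt g (v (g t)) t) (heq : f t₀ = g t₀) :
    EqOn f g (Ioo a b) := by
  intro t ht
  obtain ⟨a', ha, ha'⟩ := exists_between (lt_min ht₀.1 ht.1)
  obtain ⟨b', hb', hb⟩ := exists_between (max_lt ht₀.2 ht.2)
  rw [lt_min_iff] at ha'
  rw [max_lt_iff] at hb'
  have hsub : Icc a' b' ⊆ Ioo a b := fun r hr => ⟨ha.trans_le hr.1, hr.2.trans_lt hb⟩
  have hcont : ∀ {h : ℝ → V}, (∀ r ∈ Ioo a b, HasDerivAt h (v (h r)) r) →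
      ContinuousOn h (Icc a' b') := fun hh r hr =>
    (hh r (hsub hr)).continuousAt.continuousWithinAt
  -- `v` is Lipschitz on the compact set swept out by both solutions over `[a', b']`
  set K := f '' Icc a' b' ∪ g '' Icc a' b'
  obtain ⟨L, hL⟩ := hv.locallyLipschitzOn.exists_lipschitzOnWith_of_compact
    ((isCompact_Icc.image_of_continuousOn (hcont hf)).union
      (isCompact_Icc.image_of_continuousOn (hcont hg)))
  have hmem : ∀ {r}, r ∈ Ioo a' b' → r ∈ Icc a' b' := fun hr => Ioo_subset_Icc_self hr
  exact ODE_solution_unique_of_mem_Ioo (v := fun _ => v) (s := fun _ => K) (fun _ _ => hL)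
    ⟨ha'.1, hb'.1⟩ (fun r hr => ⟨hf r (hsub (hmem hr)), .inl ⟨r, hmem hr, rfl⟩⟩)
    (fun r hr => ⟨hg r (hsub (hmem hr)), .inr ⟨r, hmem hr, rfl⟩⟩) heq ⟨ha'.2, hb'.2⟩

theorem DifferentiableAt.hasFDerivAt_uncurry_right {f : ℝ → V → W} {t : ℝ} {x : V}
    (h : DifferentiableAt ℝ (uncurry f) (t, x)) :
    HasFDerivAt (f t) ((fderiv ℝ (uncurry f) (t, x)).comp (.inr ℝ ℝ V)) x :=
  h.hasFDerivAt.comp x (hasFDerivAt_prodMk_right t x)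

theorem DifferentiableAt.hasDerivAt_uncurry_left {f : ℝ → V → W} {t : ℝ} {x : V}
    (h : DifferentiableAt ℝ (uncurry f) (t, x)) :
    HasDerivAt (f · x) (fderiv ℝ (uncurry f) (t, x) (1, 0)) t :=
  h.hasFDerivAt.comp_hasDerivAt (l := uncurry f) t
    ((hasDerivAt_id t).prodMk (hasDerivAt_const t x))

/-- Schwarz's theorem in the form `∂ₜ Dₓ f = Dₓ ∂ₜ f`. -/
theorem ContDiffAt.hasDerivAt_fderiv_of_hasDerivAt {f g : ℝ → V → W} {t : ℝ} {x : V}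
    (hf : ContDiffAt ℝ 2 (uncurry f) (t, x))
    (hg : ∀ᶠ p in 𝓝 (t, x), HasDerivAt (f · p.2) (g p.1 p.2) p.1) :
    HasDerivAt (fun s => fderiv ℝ (f s) x) (fderiv ℝ (g t) x) t := by
  set D2 := fderiv ℝ (fderiv ℝ (uncurry f)) (t, x)
  have hdiff : ∀ᶠ p in 𝓝 (t, x), DifferentiableAt ℝ (uncurry f) p :=
    (hf.eventually (by simp)).mono fun p hp => hp.differentiableAt (by norm_num)
  have hD2 : HasFDerivAt (fderiv ℝ (uncurry f)) D2 (t, x) :=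
    ((hf.fderiv_right (m := 1) (by norm_num)).differentiableAt (by norm_num)).hasFDerivAt
  have hleft : Tendsto (fun s : ℝ => (s, x)) (𝓝 t) (𝓝 (t, x)) :=
    (continuous_id.prodMk continuous_const).tendsto t
  have hright : Tendsto (fun y : V => (t, y)) (𝓝 x) (𝓝 (t, x)) :=
    (continuous_const.prodMk continuous_id).tendsto x
  have hlhs : (fun s => fderiv ℝ (f s) x) =ᶠ[𝓝 t]
      fun s => (fderiv ℝ (uncurry f) (s, x)).comp (.inr ℝ ℝ V) :=
    (hleft.eventually hdiff).mono fun s hs => hs.hasFDerivAt_uncurry_right.fderiv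
  have hrhs : g t =ᶠ[𝓝 x] fun y => fderiv ℝ (uncurry f) (t, y) (1, 0) :=
    (hright.eventually (hdiff.and hg)).mono fun y hy =>
      hy.2.unique hy.1.hasDerivAt_uncurry_left
  have hderiv_lhs : HasDerivAt (fun s => (fderiv ℝ (uncurry f) (s, x)).comp (.inr ℝ ℝ V))
      ((D2 (1, 0)).comp (.inr ℝ ℝ V)) t := by
    have := (hD2.comp_hasDerivAt (f := fun s : ℝ => (s, x)) t
      ((hasDerivAt_id t).prodMk (hasDerivAt_const t x))).clm_comp
      (hasDerivAt_const t (ContinuousLinearMap.inr ℝ ℝ V))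
    simpa using this
  have hderiv_rhs : HasFDerivAt (fun y => fderiv ℝ (uncurry f) (t, y) (1, 0))
      ((D2.comp (.inr ℝ ℝ V)).flip (1, 0)) x := by
    have := (hD2.comp x (hasFDerivAt_prodMk_right t x)).clm_apply (hasFDerivAt_const (1, 0) x)
    simpa using this
  rw [hrhs.fderiv_eq, hderiv_rhs.fderiv]
  refine (hderiv_lhs.congr_of_eventuallyEq hlhs).congr_deriv ?_
  ext ξ
  have hsymm : IsSymmSndFDerivAt ℝ (uncurry f) (t, x) :=
    hf.isSymmSndFDerivAt (by simp only [minSmoothness_of_isRCLikeNormedField, le_refl])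
  simpa [D2] using hsymm (1, 0) (0, ξ)

theorem fderiv_bilinear_self_of_eq_zero (B : W →L[ℝ] W →L[ℝ] X) {h : V → W} {x : V}
    (hh : DifferentiableAt ℝ h x) (h0 : h x = 0) :
    fderiv ℝ (fun y => B (h y) (h y)) x = 0 := by
  simp [(B.hasFDerivAt_of_bilinear hh.hasFDerivAt hh.hasFDerivAt).fderiv, h0]

theorem fderiv_fderiv_bilinear_self_of_eq_zero (B : W →L[ℝ] W →L[ℝ] X) {h : V → W} {x : V}
    (hh : ContDiffAt ℝ 2 h x) (h0 : h x = 0) :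
    fderiv ℝ (fderiv ℝ (fun y => B (h y) (h y))) x =
      B.bilinearComp (fderiv ℝ h x) (fderiv ℝ h x) +
        (B.bilinearComp (fderiv ℝ h x) (fderiv ℝ h x)).flip := by
  have hdiff : ∀ᶠ y in 𝓝 x, DifferentiableAt ℝ h y :=
    (hh.eventually (by simp)).mono fun y hy => hy.differentiableAt (by norm_num)
  have hD2 : HasFDerivAt (fderiv ℝ h) (fderiv ℝ (fderiv ℝ h) x) x :=
    ((hh.fderiv_right (m := 1) (by norm_num)).differentiableAt (by norm_num)).hasFDerivAt
  have heq : fderiv ℝ (fun y => B (h y) (h y)) =ᶠ[𝓝 x]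
      fun y => B.precompR V (h y) (fderiv ℝ h y) + B.precompL V (fderiv ℝ h y) (h y) :=
    hdiff.mono fun y hy => (B.hasFDerivAt_of_bilinear hy.hasFDerivAt hy.hasFDerivAt).fderiv
  have hh1 := (hh.differentiableAt (by norm_num)).hasFDerivAt
  rw [heq.fderiv_eq, (((B.precompR V).hasFDerivAt_of_bilinear hh1 hD2).fun_add
    ((B.precompL V).hasFDerivAt_of_bilinear hD2 hh1)).fderiv]
  ext ξ η
  simp [h0]

theorem ContDiffAt.uncurry_fderiv {f : ℝ → V → W} {p : ℝ × V} {m n : WithTop ℕ∞}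
    (hf : ContDiffAt ℝ n (uncurry f) p) (hmn : m + 1 ≤ n) :
    ContDiffAt ℝ m (uncurry fun s => fderiv ℝ (f s)) p := by
  have hf' : ContDiffAt ℝ n (uncurry f ∘ fun q : (ℝ × V) × V => (q.1.1, q.2)) (p, p.2) :=
    hf.comp _ ((contDiff_fst.comp contDiff_fst).prodMk contDiff_snd).contDiffAt
  exact ContDiffAt.fderiv (f := fun q : ℝ × V => f q.1) hf' contDiffAt_snd hmn

theorem ContDiffAt.of_uncurry {f : ℝ → V → W} {t : ℝ} {x : V} {n : WithTop ℕ∞}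
    (hf : ContDiffAt ℝ n (uncurry f) (t, x)) : ContDiffAt ℝ n (f t) x :=
  hf.comp (f := fun y => (t, y)) x (contDiffAt_const.prodMk contDiffAt_id)

end Calculus

section QuadraticFlow

variable {V : Type*} [NormedAddCommGroup V] [NormedSpace ℝ V]
  {B : V →L[ℝ] V →L[ℝ] V} {γ : ℝ → V → V} {t : ℝ} {x : V}

theorem quadraticFlow_eqOn_zero {a b t₀ : ℝ} (ht₀ : t₀ ∈ Ioo a b)
    (hode : ∀ t ∈ Ioo a b, HasDerivAt (γ · 0) (B (γ t 0) (γ t 0)) t) (hinit : γ t₀ 0 = 0) :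
    EqOn (γ · 0) 0 (Ioo a b) :=
  ODE_solution_unique_of_mem_Ioo_of_locallyLipschitz (v := fun y => B y y)
    (B.isBoundedBilinearMap.contDiff.comp (contDiff_id.prodMk contDiff_id)).locallyLipschitz
    ht₀ hode (fun s _ => by simp) hinit

theorem hasDerivAt_fderiv_quadraticFlow (hγ : ContDiffAt ℝ 2 (uncurry γ) (t, x))
    (hode : ∀ᶠ p in 𝓝 (t, x), HasDerivAt (γ · p.2) (B (γ p.1 p.2) (γ p.1 p.2)) p.1)
    (h0 : γ t x = 0) :
    HasDerivAt (fun s => fderiv ℝ (γ s) x) 0 t := by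
  simpa [fderiv_bilinear_self_of_eq_zero B (hγ.of_uncurry.differentiableAt (by norm_num)) h0]
    using hγ.hasDerivAt_fderiv_of_hasDerivAt (g := fun s y => B (γ s y) (γ s y)) hode

theorem hasDerivAt_fderiv_fderiv_quadraticFlow (hγ : ContDiffAt ℝ 3 (uncurry γ) (t, x))
    (hode : ∀ᶠ p in 𝓝 (t, x), HasDerivAt (γ · p.2) (B (γ p.1 p.2) (γ p.1 p.2)) p.1)
    (h0 : γ t x = 0) :
    HasDerivAt (fun s => fderiv ℝ (fderiv ℝ (γ s)) x)
      (B.bilinearComp (fderiv ℝ (γ t) x) (fderiv ℝ (γ t) x) +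
        (B.bilinearComp (fderiv ℝ (γ t) x) (fderiv ℝ (γ t) x)).flip) t := by
  have hode' : ∀ᶠ p in 𝓝 (t, x), HasDerivAt (fun s => fderiv ℝ (γ s) p.2)
      (fderiv ℝ (fun y => B (γ p.1 y) (γ p.1 y)) p.2) p.1 :=
    ((hγ.eventually (by simp)).and hode.eventually_nhds).mono fun p hp =>
      (hp.1.of_le (by norm_num)).hasDerivAt_fderiv_of_hasDerivAt
        (g := fun s y => B (γ s y) (γ s y)) hp.2
  rw [← fderiv_fderiv_bilinear_self_of_eq_zero B (hγ.of_uncurry.of_le (by norm_num)) h0]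
  exact (hγ.uncurry_fderiv (by norm_num)).hasDerivAt_fderiv_of_hasDerivAt
    (g := fun s y => fderiv ℝ (fun z => B (γ s z) (γ s z)) y) hode'

theorem quadraticFlow_two_jet_zero {U : Set V} (hU : U ∈ 𝓝 0) {a b : ℝ} (h0 : (0 : ℝ) ∈ Ioo a b)
    (hsmooth : ContDiffOn ℝ 3 (uncurry γ) (Ioo a b ×ˢ U)) (hinit : ∀ x ∈ U, γ 0 x = x)
    (hode : ∀ t ∈ Ioo a b, ∀ x ∈ U, HasDerivAt (γ · x) (B (γ t x) (γ t x)) t) :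
    ∀ t ∈ Ioo a b, γ t 0 = 0 ∧ fderiv ℝ (γ t) 0 = .id ℝ V ∧
      fderiv ℝ (fderiv ℝ (γ t)) 0 = t • (B + B.flip) := by
  have h0U : (0 : V) ∈ U := mem_of_mem_nhds hU
  have hnhds : ∀ s ∈ Ioo a b, Ioo a b ×ˢ U ∈ 𝓝 (s, (0 : V)) := fun s hs =>
    prod_mem_nhds (isOpen_Ioo.mem_nhds hs) hU
  have hode' : ∀ s ∈ Ioo a b, ∀ᶠ p in 𝓝 (s, (0 : V)),
      HasDerivAt (γ · p.2) (B (γ p.1 p.2) (γ p.1 p.2)) p.1 := fun s hs =>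
    eventually_of_mem (hnhds s hs) fun p hp => hode p.1 hp.1 p.2 hp.2
  have hzero : ∀ s ∈ Ioo a b, γ s 0 = 0 := fun s hs =>
    quadraticFlow_eqOn_zero h0 (fun s hs => hode s hs 0 h0U) (hinit 0 h0U) hs
  have hinit' : γ 0 =ᶠ[𝓝 0] id := eventually_of_mem hU hinit
  have hid : fderiv ℝ (id : V → V) = fun _ => .id ℝ V := funext fun _ => fderiv_id
  have hD1 : ∀ s ∈ Ioo a b, fderiv ℝ (γ s) 0 = .id ℝ V := fun s hs => by
    have hderiv : ∀ r ∈ Ioo a b, HasDerivAt (fun s => fderiv ℝ (γ s) 0) 0 r := fun r hr =>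
      hasDerivAt_fderiv_quadraticFlow ((hsmooth.contDiffAt (hnhds r hr)).of_le (by norm_num))
        (hode' r hr) (hzero r hr)
    rw [eq_add_sub_smul_of_hasDerivAt hderiv h0 hs, hinit'.fderiv_eq, hid]
    simp
  refine fun t ht => ⟨hzero t ht, hD1 t ht, ?_⟩
  have hderiv : ∀ r ∈ Ioo a b,
      HasDerivAt (fun s => fderiv ℝ (fderiv ℝ (γ s)) 0) (B + B.flip) r := fun r hr => by
    convert hasDerivAt_fderiv_fderiv_quadraticFlow (hsmooth.contDiffAt (hnhds r hr))
      (hode' r hr) (hzero r hr) using 1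
    ext
    simp [hD1 r hr]
  rw [eq_add_sub_smul_of_hasDerivAt hderiv h0 ht, (hinit'.fderiv (𝕜 := ℝ)).fderiv_eq, hid]
  simp

end QuadraticFlow

theorem IsSymmBilin.isBilinearMap {n : ℕ} {q : E n → E n → E n} (hq : IsSymmBilin q) :
    IsBilinearMap ℝ q where
  add_left x₁ x₂ y := by rw [hq.1, (hq.2 y).map_add, hq.1 y, hq.1 y]
  smul_left c x y := by rw [hq.1, (hq.2 y).map_smul, hq.1 y]
  add_right x := (hq.2 x).map_add
  smul_right c x := (hq.2 x).map_smul c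

theorem stmt16_general {n : ℕ} (Q : E n → E n → E n) (hQ : IsSymmBilin Q)
    (U : Set (E n)) (hU : U ∈ nhds (0 : E n)) (ε : ℝ)
    (γ : ℝ → E n → E n)
    (hsmooth : ContDiffOn ℝ (⊤ : ℕ∞) (fun p : ℝ × E n => γ p.1 p.2)
      (Set.Ioo (-ε) ε ×ˢ U))
    (hinit : ∀ x ∈ U, γ 0 x = x)
    (hode : ∀ t ∈ Set.Ioo (-ε) ε, ∀ x ∈ U,
      HasDerivAt (fun s => γ s x) (Q (γ t x) (γ t x)) t) :
    ∀ t ∈ Set.Ioo (-ε) ε,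
      γ t 0 = 0 ∧
      fderiv ℝ (γ t) 0 = ContinuousLinearMap.id ℝ (E n) ∧
      ∀ ξ η : E n, iteratedFDeriv ℝ 2 (γ t) 0 ![ξ, η] = (2 * t) • Q ξ η := by
  intro t ht
  have h0 : (0 : ℝ) ∈ Ioo (-ε) ε := ⟨by linarith [ht.1, ht.2], by linarith [ht.1, ht.2]⟩
  set B := hQ.isBilinearMap.toContinuousBilinearMap
  have hodeB : ∀ s ∈ Ioo (-ε) ε, ∀ x ∈ U, HasDerivAt (γ · x) (B (γ s x) (γ s x)) s := by
    simpa only [B, IsBilinearMap.toContinuousBilinearMap_apply] using hode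
  obtain ⟨hzero, hD1, hD2⟩ := quadraticFlow_two_jet_zero hU h0
    (hsmooth.of_le (WithTop.coe_le_coe.2 le_top)) hinit hodeB t ht
  refine ⟨hzero, hD1, fun ξ η => ?_⟩
  rw [iteratedFDeriv_two_apply, hD2]
  simp [B, hQ.1 η ξ, two_mul, add_smul]

/-- surjectivity part of Lemma `lemma:Theta`: if `γ` is a `C^∞` local flow
of the quadratic vector field `X_Q(x) = Q(x,x)` on a neighborhood `U` of `0`, i.e.
`γ(0,x) = x` and `∂γ/∂t(t,x) = Q(γ(t,x),γ(t,x))`, then for each `t ∈ (−ε,ε)` one has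
`γ(t,0) = 0`, `D⁽¹⁾₀ γ(t,·) = I`, and `D⁽²⁾₀ γ(t,·) = 2t·Q`. -/
theorem stmt16 {n : ℕ} (Q : E n → E n → E n) (hQ : IsSymmBilin Q)
    (U : Set (E n)) (hU : U ∈ nhds (0 : E n)) (ε : ℝ) (hε : 0 < ε)
    (γ : ℝ → E n → E n)
    (hsmooth : ContDiffOn ℝ (⊤ : ℕ∞) (fun p : ℝ × E n => γ p.1 p.2)
      (Set.Ioo (-ε) ε ×ˢ U))
    (hinit : ∀ x ∈ U, γ 0 x = x)
    (hode : ∀ t ∈ Set.Ioo (-ε) ε, ∀ x ∈ U,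
      HasDerivAt (fun s => γ s x) (Q (γ t x) (γ t x)) t) :
    ∀ t ∈ Set.Ioo (-ε) ε,
      γ t 0 = 0 ∧
      fderiv ℝ (γ t) 0 = ContinuousLinearMap.id ℝ (E n) ∧
      ∀ ξ η : E n, iteratedFDeriv ℝ 2 (γ t) 0 ![ξ, η] = (2 * t) • Q ξ η :=
  stmt16_general Q hQ U hU ε γ hsmooth hinit hode

end
end

section
/- Let U be a neighborhood of 0 in ℝ^n and let G₁, G₂ : U → ℝ^n be C^∞ maps with G_i(0) = 0 and first derivative D⁽¹⁾₀G_i = I at 0 for i = 1,2, such that the compositions G₁∘G₂ and G₂∘G₁ are defined on a neighborhood of 0. Then D⁽³⁾₀(G₁∘G₂) − D⁽³⁾₀(G₂∘G₁) = [D⁽²⁾₀G₁, D⁽²⁾₀G₂], where for symmetric bilinear maps Q, Q' : ℝ^n × ℝ^n → ℝ^n the bracket is defined by [Q,Q'](ξ,η,θ) = Q(ξ,Q'(η,θ)) + Q(η,Q'(θ,ξ)) + Q(θ,Q'(ξ,η)) − Q'(ξ,Q(η,θ)) − Q'(η,Q(θ,ξ)) − Q'(θ,Q(ξ,η)). -/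
/-! When `Df = Dg = id` at a common fixed point, Faà di Bruno's formula in order three reads
`D³(g ∘ f) = D³g + D³f + D²g(D²f(ξ, η), θ) + D²g(η, D²f(ξ, θ)) + D²g(ξ, D²f(η, θ))`.
In `D³(G₁ ∘ G₂) - D³(G₂ ∘ G₁)` the pure third derivatives cancel, and by the symmetry of
second derivatives the six mixed terms are exactly those of `[D²G₁, D²G₂](ξ, η, θ)`. -/

noncomputable section

/-- The bracket `[Q,Q']` of two (symmetric bilinear) maps. -/
def brk {n : ℕ} (Q Q' : E n → E n → E n) (ξ η θ : E n) : E n :=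
  (Q ξ (Q' η θ) + Q η (Q' θ ξ) + Q θ (Q' ξ η))
    - (Q' ξ (Q η θ) + Q' η (Q θ ξ) + Q' θ (Q ξ η))

section

variable {M : Type*} [AddCommMonoid M]

/- These are stated for `Fin k` with `k = 0, 1, 2` given by a hypothesis, so that they also
apply to sums over `Fin c.length`, where `c.length` is only definitionally a numeral. -/

theorem Fintype.sum_option_fin_of_eq_zero {k : ℕ} (hk : k = 0) (f : Option (Fin k) → M) :
    ∑ i, f i = f none := by
  subst hk; simp only [Fintype.sum_unique]; rfl

theorem Fintype.sum_option_fin_of_eq_one {k : ℕ} (hk : k = 1) (f : Option (Fin k) → M) :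
    ∑ i, f i = f none + f (some ⟨0, by omega⟩) := by
  subst hk; simp [Fintype.sum_option]

theorem Fintype.sum_option_fin_of_eq_two {k : ℕ} (hk : k = 2) (f : Option (Fin k) → M) :
    ∑ i, f i = f none + f (some ⟨0, by omega⟩) + f (some ⟨1, by omega⟩) := by
  subst hk; simp [Fintype.sum_option, Fin.sum_univ_two, add_assoc]

namespace OrderedFinpartition

theorem sum_eq_sum_extend {n : ℕ} (f : OrderedFinpartition (n + 1) → M) :
    ∑ c, f c = ∑ c : OrderedFinpartition n, ∑ i : Option (Fin c.length), f (c.extend i) := by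
  rw [← Fintype.sum_equiv (extendEquiv n) _ f fun _ ↦ rfl, ← Finset.univ_sigma_univ,
    Finset.sum_sigma]
  rfl

theorem sum_one (f : OrderedFinpartition 1 → M) : ∑ c, f c = f (atomic 0).extendLeft := by
  rw [sum_eq_sum_extend, Fintype.sum_unique, Fintype.sum_option_fin_of_eq_zero] <;> rfl

theorem sum_two (f : OrderedFinpartition 2 → M) :
    ∑ c, f c =
      f (atomic 0).extendLeft.extendLeft
      + f ((atomic 0).extendLeft.extendMiddle ⟨0, by decide⟩) := by
  rw [sum_eq_sum_extend, sum_one, Fintype.sum_option_fin_of_eq_one] <;> rfl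

theorem sum_three (f : OrderedFinpartition 3 → M) :
    ∑ c, f c =
      f (atomic 0).extendLeft.extendLeft.extendLeft
      + f ((atomic 0).extendLeft.extendLeft.extendMiddle ⟨0, by decide⟩)
      + f ((atomic 0).extendLeft.extendLeft.extendMiddle ⟨1, by decide⟩)
      + f ((atomic 0).extendLeft.extendMiddle ⟨0, by decide⟩).extendLeft
      + f (((atomic 0).extendLeft.extendMiddle ⟨0, by decide⟩).extendMiddle ⟨0, by decide⟩) := by
  rw [sum_eq_sum_extend, sum_two, Fintype.sum_option_fin_of_eq_two,
    Fintype.sum_option_fin_of_eq_one, ← add_assoc] <;> rfl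

end OrderedFinpartition

end

section

variable {𝕜 F G H : Type*} [NontriviallyNormedField 𝕜]
  [NormedAddCommGroup F] [NormedSpace 𝕜 F] [NormedAddCommGroup G] [NormedSpace 𝕜 G]
  [NormedAddCommGroup H] [NormedSpace 𝕜 H]

theorem FormalMultilinearSeries.taylorComp_three_apply (q : FormalMultilinearSeries 𝕜 G H)
    (p : FormalMultilinearSeries 𝕜 F G) (v : Fin 3 → F) :
    q.taylorComp p 3 v =
      q 3 ![p 1 ![v 0], p 1 ![v 1], p 1 ![v 2]]
      + q 2 ![p 2 ![v 0, v 1], p 1 ![v 2]]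
      + q 2 ![p 1 ![v 1], p 2 ![v 0, v 2]]
      + q 2 ![p 1 ![v 0], p 2 ![v 1, v 2]]
      + q 1 ![p 3 v] := by
  rw [FormalMultilinearSeries.taylorComp, sum_apply, OrderedFinpartition.sum_three]
  simp only [FormalMultilinearSeries.compAlongOrderedFinpartition_apply]
  congr 1; congr 1; congr 1; congr 1
  all_goals
    refine q.congr rfl fun i hi _ ↦ ?_
    interval_cases i
    all_goals
      refine p.congr rfl fun j hj _ ↦ ?_
      interval_cases j <;> rfl

theorem iteratedFDeriv_comp_three_apply {g : G → H} {f : F → G} {x : F}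
    (hg : ContDiffAt 𝕜 3 g (f x)) (hf : ContDiffAt 𝕜 3 f x) (a b c : F) :
    iteratedFDeriv 𝕜 3 (g ∘ f) x ![a, b, c] =
      iteratedFDeriv 𝕜 3 g (f x) ![fderiv 𝕜 f x a, fderiv 𝕜 f x b, fderiv 𝕜 f x c]
      + iteratedFDeriv 𝕜 2 g (f x) ![iteratedFDeriv 𝕜 2 f x ![a, b], fderiv 𝕜 f x c]
      + iteratedFDeriv 𝕜 2 g (f x) ![fderiv 𝕜 f x b, iteratedFDeriv 𝕜 2 f x ![a, c]]
      + iteratedFDeriv 𝕜 2 g (f x) ![fderiv 𝕜 f x a, iteratedFDeriv 𝕜 2 f x ![b, c]]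
      + fderiv 𝕜 g (f x) (iteratedFDeriv 𝕜 3 f x ![a, b, c]) := by
  simp only [iteratedFDeriv_comp hg hf le_rfl, FormalMultilinearSeries.taylorComp_three_apply,
    ftaylorSeries, iteratedFDeriv_one_apply]
  rfl

theorem iteratedFDeriv_comp_three_apply_of_fderiv_eq_id {g f : F → F} {x : F} (hfx : f x = x)
    (hg : ContDiffAt 𝕜 3 g x) (hf : ContDiffAt 𝕜 3 f x)
    (hDg : fderiv 𝕜 g x = ContinuousLinearMap.id 𝕜 F)
    (hDf : fderiv 𝕜 f x = ContinuousLinearMap.id 𝕜 F) (a b c : F) :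
    iteratedFDeriv 𝕜 3 (g ∘ f) x ![a, b, c] =
      iteratedFDeriv 𝕜 3 g x ![a, b, c]
      + iteratedFDeriv 𝕜 2 g x ![iteratedFDeriv 𝕜 2 f x ![a, b], c]
      + iteratedFDeriv 𝕜 2 g x ![b, iteratedFDeriv 𝕜 2 f x ![a, c]]
      + iteratedFDeriv 𝕜 2 g x ![a, iteratedFDeriv 𝕜 2 f x ![b, c]]
      + iteratedFDeriv 𝕜 3 f x ![a, b, c] := by
  rw [iteratedFDeriv_comp_three_apply (by rwa [hfx]) hf, hfx, hDg, hDf]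
  rfl

end

theorem stmt17_general {n : ℕ} (U : Set (E n)) (hU : U ∈ nhds (0 : E n))
    (G₁ G₂ : E n → E n)
    (hsm₁ : ContDiffOn ℝ (⊤ : ℕ∞) G₁ U) (hsm₂ : ContDiffOn ℝ (⊤ : ℕ∞) G₂ U)
    (h0₁ : G₁ 0 = 0) (h0₂ : G₂ 0 = 0)
    (hD₁ : fderiv ℝ G₁ 0 = ContinuousLinearMap.id ℝ (E n))
    (hD₂ : fderiv ℝ G₂ 0 = ContinuousLinearMap.id ℝ (E n)) :
    ∀ ξ η θ : E n,
      iteratedFDeriv ℝ 3 (G₁ ∘ G₂) 0 ![ξ, η, θ]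
          - iteratedFDeriv ℝ 3 (G₂ ∘ G₁) 0 ![ξ, η, θ]
        = brk (fun a b => iteratedFDeriv ℝ 2 G₁ 0 ![a, b])
            (fun a b => iteratedFDeriv ℝ 2 G₂ 0 ![a, b]) ξ η θ := by
  intro ξ η θ
  have h3 : (3 : WithTop ℕ∞) ≤ (⊤ : ℕ∞) :=
    ENat.natCast_le_of_coe_top_le_withTop le_rfl 3
  have hC₁ : ContDiffAt ℝ 3 G₁ 0 := (hsm₁.contDiffAt hU).of_le h3
  have hC₂ : ContDiffAt ℝ 3 G₂ 0 := (hsm₂.contDiffAt hU).of_le h3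
  have hS₁ : IsSymmSndFDerivAt ℝ G₁ 0 :=
    hC₁.isSymmSndFDerivAt (by norm_num [minSmoothness_of_isRCLikeNormedField])
  have hS₂ : IsSymmSndFDerivAt ℝ G₂ 0 :=
    hC₂.isSymmSndFDerivAt (by norm_num [minSmoothness_of_isRCLikeNormedField])
  rw [iteratedFDeriv_comp_three_apply_of_fderiv_eq_id h0₂ hC₁ hC₂ hD₁ hD₂,
    iteratedFDeriv_comp_three_apply_of_fderiv_eq_id h0₁ hC₂ hC₁ hD₂ hD₁,
    IsSymmSndFDerivAt.iteratedFDeriv_cons (hf := hS₁) (v := iteratedFDeriv ℝ 2 G₂ 0 ![ξ, η]),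
    IsSymmSndFDerivAt.iteratedFDeriv_cons (hf := hS₂) (v := iteratedFDeriv ℝ 2 G₁ 0 ![ξ, η]),
    IsSymmSndFDerivAt.iteratedFDeriv_cons (hf := hS₁) (v := ξ) (w := θ),
    IsSymmSndFDerivAt.iteratedFDeriv_cons (hf := hS₂) (v := ξ) (w := θ), brk]
  abel

/-- Equation (2) of the paper: if `G₁, G₂` are `C^∞` maps fixing `0` with
identity first derivative at `0`, whose compositions are defined near `0`, then
`D⁽³⁾₀(G₁∘G₂) − D⁽³⁾₀(G₂∘G₁) = [D⁽²⁾₀G₁, D⁽²⁾₀G₂]`. -/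
theorem stmt17 {n : ℕ} (U : Set (E n)) (hU : U ∈ nhds (0 : E n))
    (G₁ G₂ : E n → E n)
    (hsm₁ : ContDiffOn ℝ (⊤ : ℕ∞) G₁ U) (hsm₂ : ContDiffOn ℝ (⊤ : ℕ∞) G₂ U)
    (h0₁ : G₁ 0 = 0) (h0₂ : G₂ 0 = 0)
    (hD₁ : fderiv ℝ G₁ 0 = ContinuousLinearMap.id ℝ (E n))
    (hD₂ : fderiv ℝ G₂ 0 = ContinuousLinearMap.id ℝ (E n))
    (V : Set (E n)) (hV : V ∈ nhds (0 : E n))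
    (hmaps₁ : Set.MapsTo G₁ V U) (hmaps₂ : Set.MapsTo G₂ V U) (hVU : V ⊆ U) :
    ∀ ξ η θ : E n,
      iteratedFDeriv ℝ 3 (G₁ ∘ G₂) 0 ![ξ, η, θ]
          - iteratedFDeriv ℝ 3 (G₂ ∘ G₁) 0 ![ξ, η, θ]
        = brk (fun a b => iteratedFDeriv ℝ 2 G₁ 0 ![a, b])
            (fun a b => iteratedFDeriv ℝ 2 G₂ 0 ![a, b]) ξ η θ :=
  stmt17_general U hU G₁ G₂ hsm₁ hsm₂ h0₁ h0₂ hD₁ hD₂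

end
end
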